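/- arXiv:1212.3191 — 5 statements merged into one kernel-verified Lean document; each statement's English description precedes it below -/
import Mathlib

section
/- The r-Bell polynomial satisfies the exponential formula: B_n(z;r) = exp(-z) · Σ_{k≥0} (k+r)^n · z^k/k!, as an identity of formal power series (equivalently, for all real z, the series converges and equals B_n(z;r)). -/
open Finset

/-- `𝒜` is a set partition of `Fin N`: blocks are nonempty and every element
lies in exactly one block. -/
def IsSetPartition {N : ℕ} (𝒜 : Finset (Finset (Fin N))) : Prop :=
  (∀ t ∈ 𝒜, t.Nonempty) ∧ ∀ x : Fin N, ∃! t, t ∈ 𝒜 ∧ x ∈ t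

/-- The elements of `S` lie in pairwise distinct blocks of `𝒜`. -/
def DistinctBlocks {N : ℕ} (𝒜 : Finset (Finset (Fin N))) (S : Set (Fin N)) : Prop :=
  ∀ a ∈ S, ∀ b ∈ S, a ≠ b → ∀ t ∈ 𝒜, ¬(a ∈ t ∧ b ∈ t)

/-- The `r`-Stirling number of the second kind `{n+r brace k+r}_r`: the number of
partitions of `{1,…,n+r}` into `k+r` nonempty blocks with `1,…,r` in distinct blocks. -/
noncomputable def rStirling (r n k : ℕ) : ℕ :=
  Nat.card {𝒜 : Finset (Finset (Fin (n + r))) //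
    IsSetPartition 𝒜 ∧ 𝒜.card = k + r ∧ DistinctBlocks 𝒜 {x | (x : ℕ) < r}}

/-- The `(r₁,r₂)`-Stirling number of the second kind `{n+r₁+r₂ brace k+r₂}_{r₁,r₂}`. -/
noncomputable def rrStirling (r₁ r₂ n k : ℕ) : ℕ :=
  Nat.card {𝒜 : Finset (Finset (Fin (n + r₁ + r₂))) //
    IsSetPartition 𝒜 ∧ 𝒜.card = k + r₂ ∧
    DistinctBlocks 𝒜 {x | (x : ℕ) < r₁} ∧
    DistinctBlocks 𝒜 {x | r₁ ≤ (x : ℕ) ∧ (x : ℕ) < r₁ + r₂}}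

/-- The `r`-Bell polynomial `B_n(z;r) = Σ_{k=0}^n {n+r brace k+r}_r z^k`. -/
noncomputable def rBell (r n : ℕ) (z : ℝ) : ℝ :=
  ∑ k ∈ range (n + 1), (rStirling r n k : ℝ) * z ^ k

/-- The `(r₁,r₂)`-Bell polynomial `B_n(z;r₁,r₂) = Σ_{k=0}^{n+r₁} {n+r₁+r₂ brace k+r₂}_{r₁,r₂} z^k`. -/
noncomputable def rrBell (r₁ r₂ n : ℕ) (z : ℝ) : ℝ :=
  ∑ k ∈ range (n + r₁ + 1), (rrStirling r₁ r₂ n k : ℝ) * z ^ k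

attribute [local instance] Classical.propDecidable

section Part
variable {N : ℕ} {𝒜 : Finset (Finset (Fin N))} (h : IsSetPartition 𝒜)

noncomputable def blk (x : Fin N) : Finset (Fin N) := (h.2 x).exists.choose

lemma blk_mem (x : Fin N) : blk h x ∈ 𝒜 := (h.2 x).exists.choose_spec.1

lemma mem_blk (x : Fin N) : x ∈ blk h x := (h.2 x).exists.choose_spec.2

lemma blk_unique {t : Finset (Fin N)} {x : Fin N} (ht : t ∈ 𝒜) (hx : x ∈ t) :
    t = blk h x :=
  (h.2 x).unique ⟨ht, hx⟩ ⟨blk_mem h x, mem_blk h x⟩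

lemma card_le (h : IsSetPartition 𝒜) : 𝒜.card ≤ N := by
  have hdisj : (𝒜 : Set (Finset (Fin N))).PairwiseDisjoint id := by
    intro t ht t' ht' hne
    simp only [Function.onFun, id]
    rw [Finset.disjoint_left]
    intro x hx hx'
    exact hne ((blk_unique h ht hx).trans (blk_unique h ht' hx').symm)
  calc 𝒜.card ≤ (𝒜.biUnion id).card := Finset.card_le_card_biUnion hdisj (fun t ht => h.1 t ht)
    _ ≤ (Finset.univ : Finset (Fin N)).card := Finset.card_le_card (Finset.subset_univ _)
    _ = N := by simp

lemma card_distinguished (h : IsSetPartition 𝒜) {r : ℕ} (hrN : r ≤ N)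
    (hD : DistinctBlocks 𝒜 {x | (x : ℕ) < r}) :
    (𝒜.filter (fun t => ∃ x ∈ t, x.val < r)).card = r := by
  have key : (Finset.range r).card = (𝒜.filter (fun t => ∃ x ∈ t, x.val < r)).card := by
    apply Finset.card_bij (fun a ha => blk h ⟨a, lt_of_lt_of_le (Finset.mem_range.1 ha) hrN⟩)
    · intro a ha
      simp only [Finset.mem_filter]
      exact ⟨blk_mem h _, ⟨a, lt_of_lt_of_le (Finset.mem_range.1 ha) hrN⟩,
        mem_blk h _, Finset.mem_range.1 ha⟩
    · intro a ha b hb hab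
      by_contra hne
      have hane : (⟨a, lt_of_lt_of_le (Finset.mem_range.1 ha) hrN⟩ : Fin N) ≠
          ⟨b, lt_of_lt_of_le (Finset.mem_range.1 hb) hrN⟩ := by
        simp only [ne_eq, Fin.mk.injEq]; exact hne
      exact hD _ (Finset.mem_range.1 ha) _ (Finset.mem_range.1 hb) hane _
        (blk_mem h _) ⟨mem_blk h _, hab ▸ mem_blk h _⟩
    · intro t ht
      rw [Finset.mem_filter] at ht
      obtain ⟨ht𝒜, x, hxt, hxr⟩ := ht
      refine ⟨(x : ℕ), Finset.mem_range.2 hxr, ?_⟩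
      have : (⟨(x : ℕ), lt_of_lt_of_le hxr hrN⟩ : Fin N) = x := by ext; rfl
      rw [this]
      exact (blk_unique h ht𝒜 hxt).symm
  simpa using key.symm

lemma card_ge (h : IsSetPartition 𝒜) {r : ℕ} (hrN : r ≤ N) (hD : DistinctBlocks 𝒜 {x | (x : ℕ) < r}) :
    r ≤ 𝒜.card := by
  rw [← card_distinguished h hrN hD]
  exact Finset.card_le_card (Finset.filter_subset _ _)

lemma card_free (h : IsSetPartition 𝒜) {r : ℕ} (hrN : r ≤ N)
    (hD : DistinctBlocks 𝒜 {x | (x : ℕ) < r}) :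
    (𝒜.filter (fun t => ∀ x ∈ t, r ≤ x.val)).card = 𝒜.card - r := by
  have h1 := Finset.card_filter_add_card_filter_not
    (s := 𝒜) (p := fun t => ∀ x ∈ t, r ≤ x.val)
  have h2 : 𝒜.filter (fun t => ¬ ∀ x ∈ t, r ≤ x.val)
      = 𝒜.filter (fun t => ∃ x ∈ t, x.val < r) := by
    apply Finset.filter_congr
    intro t _
    simp only [not_forall, not_le, exists_prop]
  rw [h2, card_distinguished h hrN hD] at h1
  omega

end Part

section Bij
variable {N r m : ℕ}

abbrev Gfix (N r m : ℕ) := {g : Fin N → Fin (m + r) // ∀ x : Fin N, x.val < r → (g x).val = x.val}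

def fibers (g : Fin N → Fin (m + r)) : Finset (Finset (Fin N)) :=
  Finset.univ.image (fun x => Finset.univ.filter (fun z => g z = g x))

lemma fibers_isPartition (g : Fin N → Fin (m + r)) : IsSetPartition (fibers g) := by
  constructor
  · intro t ht
    rw [fibers, Finset.mem_image] at ht
    obtain ⟨x, _, rfl⟩ := ht
    exact ⟨x, by simp⟩
  · intro x
    refine ⟨Finset.univ.filter (fun z => g z = g x),
      ⟨Finset.mem_image_of_mem _ (Finset.mem_univ x), by simp⟩, ?_⟩
    rintro t ⟨ht, hxt⟩
    rw [fibers, Finset.mem_image] at ht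
    obtain ⟨y, _, rfl⟩ := ht
    simp only [Finset.mem_filter, Finset.mem_univ, true_and] at hxt
    ext z
    simp only [Finset.mem_filter, Finset.mem_univ, true_and, hxt]

lemma fibers_distinct (g : Fin N → Fin (m + r))
    (hg : ∀ x : Fin N, x.val < r → (g x).val = x.val) :
    DistinctBlocks (fibers g) {x | (x : ℕ) < r} := by
  intro a ha b hb hab t ht hmem
  obtain ⟨hat, hbt⟩ := hmem
  rw [fibers, Finset.mem_image] at ht
  obtain ⟨y, _, rfl⟩ := ht
  simp only [Finset.mem_filter, Finset.mem_univ, true_and] at hat hbt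
  have hgab : g a = g b := hat.trans hbt.symm
  have : a.val = b.val := by rw [← hg a ha, ← hg b hb, hgab]
  exact hab (Fin.ext this)

variable (𝒜 : Finset (Finset (Fin N)))

abbrev FreeB (r : ℕ) := {t : Finset (Fin N) // t ∈ 𝒜 ∧ ∀ x ∈ t, r ≤ x.val}

variable {𝒜}

noncomputable def gfun (h : IsSetPartition 𝒜) (φ : FreeB 𝒜 r → Fin m) : Fin N → Fin (m + r) :=
  fun x =>
  if hd : ∃ d : Fin N, d.val < r ∧ d ∈ blk h x then
    ⟨hd.choose.val, lt_of_lt_of_le hd.choose_spec.1 (Nat.le_add_left r m)⟩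
  else
    (φ ⟨blk h x, blk_mem h x, fun y hy => le_of_not_gt fun hc => hd ⟨y, hc, hy⟩⟩).addNat r

variable {h : IsSetPartition 𝒜} {φ : FreeB 𝒜 r → Fin m}

lemma gfun_blk {x y : Fin N} (hxy : blk h x = blk h y) :
    gfun h φ x = gfun h φ y := by
  simp only [gfun, hxy]

lemma gfun_dist (hD : DistinctBlocks 𝒜 {x | (x : ℕ) < r}) {d x : Fin N}
    (hdr : d.val < r) (hdx : d ∈ blk h x) : (gfun h φ x).val = d.val := by
  have hd : ∃ d' : Fin N, d'.val < r ∧ d' ∈ blk h x := ⟨d, hdr, hdx⟩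
  simp only [gfun, dif_pos hd]
  obtain ⟨h1, h2⟩ := hd.choose_spec
  by_contra hne
  have hne' : hd.choose ≠ d := fun he => hne (by rw [he])
  exact hD _ h1 _ hdr hne' _ (blk_mem h x) ⟨h2, hdx⟩

lemma gfun_free (t : FreeB 𝒜 r) {x : Fin N} (hx : x ∈ t.1) :
    (gfun h φ x).val = (φ t).val + r := by
  have hbx : blk h x = t.1 := (blk_unique h t.2.1 hx).symm
  have hd : ¬ ∃ d : Fin N, d.val < r ∧ d ∈ blk h x := by
    rintro ⟨d, hdr, hdx⟩
    rw [hbx] at hdx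
    exact absurd (t.2.2 d hdx) (by omega)
  simp only [gfun, dif_neg hd]
  have key : ∀ s : FreeB 𝒜 r, s.1 = t.1 → (φ s).val + r = (φ t).val + r := by
    intro s hs
    rw [Subtype.ext hs]
  exact key _ hbx

lemma gfun_mem_Gfix (hD : DistinctBlocks 𝒜 {x | (x : ℕ) < r}) (x : Fin N)
    (hx : x.val < r) : (gfun h φ x).val = x.val :=
  gfun_dist hD hx (mem_blk h x)

lemma mem_blk_iff {z x : Fin N} : z ∈ blk h x ↔ blk h z = blk h x := by
  constructor
  · intro hz
    exact ((blk_unique h (blk_mem h x) hz)).symm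
  · intro he
    rw [← he]
    exact mem_blk h z

lemma gfun_eq_iff (hD : DistinctBlocks 𝒜 {x | (x : ℕ) < r})
    (φinj : Function.Injective φ) {x y : Fin N} :
    gfun h φ x = gfun h φ y ↔ blk h x = blk h y := by
  constructor
  · intro he
    by_cases hx : ∃ d : Fin N, d.val < r ∧ d ∈ blk h x
    · obtain ⟨dx, hdx1, hdx2⟩ := hx
      by_cases hy : ∃ d : Fin N, d.val < r ∧ d ∈ blk h y
      · obtain ⟨dy, hdy1, hdy2⟩ := hy
        have h1 : (gfun h φ x).val = dx.val := gfun_dist hD hdx1 hdx2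
        have h2 : (gfun h φ y).val = dy.val := gfun_dist hD hdy1 hdy2
        have : dx = dy := Fin.ext (by rw [← h1, ← h2, he])
        rw [← mem_blk_iff.1 hdx2, ← mem_blk_iff.1 hdy2, this]
      · have h1 : (gfun h φ x).val = dx.val := gfun_dist hD hdx1 hdx2
        have h2 : (gfun h φ y).val =
            (φ ⟨blk h y, blk_mem h y, fun z hz => le_of_not_gt fun hc => hy ⟨z, hc, hz⟩⟩).val + r :=
          gfun_free _ (mem_blk h y)
        rw [he, h2] at h1
        omega
    · by_cases hy : ∃ d : Fin N, d.val < r ∧ d ∈ blk h y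
      · obtain ⟨dy, hdy1, hdy2⟩ := hy
        have h2 : (gfun h φ y).val = dy.val := gfun_dist hD hdy1 hdy2
        have h1 : (gfun h φ x).val =
            (φ ⟨blk h x, blk_mem h x, fun z hz => le_of_not_gt fun hc => hx ⟨z, hc, hz⟩⟩).val + r :=
          gfun_free _ (mem_blk h x)
        rw [he, h2] at h1
        omega
      · have h1 : (gfun h φ x).val =
            (φ ⟨blk h x, blk_mem h x, fun z hz => le_of_not_gt fun hc => hx ⟨z, hc, hz⟩⟩).val + r :=
          gfun_free _ (mem_blk h x)
        have h2 : (gfun h φ y).val =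
            (φ ⟨blk h y, blk_mem h y, fun z hz => le_of_not_gt fun hc => hy ⟨z, hc, hz⟩⟩).val + r :=
          gfun_free _ (mem_blk h y)
        rw [he, h2] at h1
        have := φinj (Fin.ext (by omega :
          (φ ⟨blk h x, blk_mem h x, fun z hz => le_of_not_gt fun hc => hx ⟨z, hc, hz⟩⟩).val =
          (φ ⟨blk h y, blk_mem h y, fun z hz => le_of_not_gt fun hc => hy ⟨z, hc, hz⟩⟩).val))
        exact congrArg Subtype.val this
  · intro he
    exact gfun_blk he

lemma fiber_eq_blk (hD : DistinctBlocks 𝒜 {x | (x : ℕ) < r})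
    (φinj : Function.Injective φ) (x : Fin N) :
    Finset.univ.filter (fun z => gfun h φ z = gfun h φ x) = blk h x := by
  ext z
  simp only [Finset.mem_filter, Finset.mem_univ, true_and]
  rw [gfun_eq_iff hD φinj, mem_blk_iff]

lemma fibers_gfun (hD : DistinctBlocks 𝒜 {x | (x : ℕ) < r})
    (φinj : Function.Injective φ) : fibers (gfun h φ) = 𝒜 := by
  ext t
  rw [fibers, Finset.mem_image]
  constructor
  · rintro ⟨x, _, rfl⟩
    rw [fiber_eq_blk hD φinj]
    exact blk_mem h x
  · intro ht
    obtain ⟨x, hx⟩ := h.1 t ht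
    refine ⟨x, Finset.mem_univ x, ?_⟩
    rw [fiber_eq_blk hD φinj]
    exact (blk_unique h ht hx).symm

lemma card_fiber (h : IsSetPartition 𝒜) (hD : DistinctBlocks 𝒜 {x | (x : ℕ) < r})
    (hrN : r ≤ N) :
    Nat.card {g : Gfix N r m // fibers g.1 = 𝒜} = Nat.card (FreeB 𝒜 r ↪ Fin m) := by
  have const_on : ∀ g : Gfix N r m, fibers g.1 = 𝒜 → ∀ t ∈ 𝒜, ∀ x ∈ t, ∀ y ∈ t,
      g.1 x = g.1 y := by
    rintro g hfib t ht x hx y hy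
    rw [← hfib, fibers, Finset.mem_image] at ht
    obtain ⟨w, _, rfl⟩ := ht
    simp only [Finset.mem_filter, Finset.mem_univ, true_and] at hx hy
    rw [hx, hy]
  have blocks_fibers : ∀ g : Gfix N r m, fibers g.1 = 𝒜 → ∀ t ∈ 𝒜, ∀ x ∈ t,
      t = Finset.univ.filter (fun z => g.1 z = g.1 x) := by
    rintro g hfib t ht x hx
    have ht' := ht
    rw [← hfib, fibers, Finset.mem_image] at ht'
    obtain ⟨w, _, rfl⟩ := ht'
    simp only [Finset.mem_filter, Finset.mem_univ, true_and] at hx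
    ext z
    simp only [Finset.mem_filter, Finset.mem_univ, true_and, hx]
  have free_ge : ∀ g : Gfix N r m, fibers g.1 = 𝒜 → ∀ t : FreeB 𝒜 r, ∀ x ∈ t.1,
      r ≤ (g.1 x).val := by
    rintro g hfib t x hx
    by_contra hc
    push_neg at hc
    set d : Fin N := ⟨(g.1 x).val, lt_of_lt_of_le hc hrN⟩ with hdd
    have hgd : (g.1 d).val = (g.1 x).val := g.2 d hc
    have : d ∈ t.1 := by
      rw [blocks_fibers g hfib t.1 t.2.1 x hx]
      simp only [Finset.mem_filter, Finset.mem_univ, true_and]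
      exact Fin.ext hgd
    have := t.2.2 d this
    simp only [hdd] at this
    omega
  symm
  apply Nat.card_eq_of_bijective
    (fun (φ : FreeB 𝒜 r ↪ Fin m) => (⟨⟨gfun h ⇑φ, fun x hx => gfun_mem_Gfix hD x hx⟩,
      fibers_gfun hD φ.injective⟩ : {g : Gfix N r m // fibers g.1 = 𝒜}))
  constructor
  · intro φ φ' he
    have hgg : gfun h ⇑φ = gfun h ⇑φ' := congrArg (fun g => g.1.1) he
    apply Function.Embedding.ext
    intro t
    obtain ⟨x, hx⟩ := h.1 t.1 t.2.1
    have h1 : (gfun h ⇑φ x).val = (φ t).val + r := gfun_free t hx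
    have h2 : (gfun h ⇑φ' x).val = (φ' t).val + r := gfun_free t hx
    rw [hgg, h2] at h1
    exact (Fin.ext (by omega)).symm
  · rintro ⟨⟨g, hg⟩, hfib⟩
    have constg : ∀ t ∈ 𝒜, ∀ x ∈ t, ∀ y ∈ t, g x = g y :=
      fun t ht x hx y hy => const_on ⟨g, hg⟩ hfib t ht x hx y hy
    have blocksg : ∀ t ∈ 𝒜, ∀ x ∈ t, t = Finset.univ.filter (fun z => g z = g x) :=
      fun t ht x hx => blocks_fibers ⟨g, hg⟩ hfib t ht x hx
    have freeg : ∀ t : FreeB 𝒜 r, ∀ x ∈ t.1, r ≤ (g x).val :=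
      fun t x hx => free_ge ⟨g, hg⟩ hfib t x hx
    have hrep : ∀ t : FreeB 𝒜 r, (h.1 t.1 t.2.1).choose ∈ t.1 :=
      fun t => (h.1 t.1 t.2.1).choose_spec
    have hφb : ∀ t : FreeB 𝒜 r, (g (h.1 t.1 t.2.1).choose).val - r < m := by
      intro t
      have h1 := freeg t _ (hrep t)
      have h2 := (g (h.1 t.1 t.2.1).choose).isLt
      omega
    set φ0 : FreeB 𝒜 r → Fin m := fun t => ⟨(g (h.1 t.1 t.2.1).choose).val - r, hφb t⟩
      with hφ0
    have hval : ∀ s : FreeB 𝒜 r, (φ0 s).val = (g (h.1 s.1 s.2.1).choose).val - r :=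
      fun s => rfl
    have φ0inj : Function.Injective φ0 := by
      intro t t' he
      have h1 := freeg t _ (hrep t)
      have h2 := freeg t' _ (hrep t')
      have hv : (g (h.1 t.1 t.2.1).choose).val = (g (h.1 t'.1 t'.2.1).choose).val := by
        have hc := congrArg Fin.val he
        rw [hval, hval] at hc
        omega
      apply Subtype.ext
      rw [blocksg t.1 t.2.1 _ (hrep t), blocksg t'.1 t'.2.1 _ (hrep t')]
      ext z
      simp only [Finset.mem_filter, Finset.mem_univ, true_and, Fin.ext_iff, hv]
    refine ⟨⟨φ0, φ0inj⟩, ?_⟩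
    apply Subtype.ext
    apply Subtype.ext
    funext x
    apply Fin.ext
    show (gfun h φ0 x).val = (g x).val
    by_cases hd : ∃ d : Fin N, d.val < r ∧ d ∈ blk h x
    · obtain ⟨d, hd1, hd2⟩ := hd
      have h1 : (gfun h φ0 x).val = d.val := gfun_dist hD hd1 hd2
      have h2 : g x = g d :=
        constg _ (blk_mem h x) x (mem_blk h x) d hd2
      rw [h1, h2, hg d hd1]
    · push_neg at hd
      have hfree : ∀ y ∈ blk h x, r ≤ y.val := fun y hy => le_of_not_gt fun hc => hd y hc hy
      have h1 : (gfun h φ0 x).val = (φ0 ⟨blk h x, blk_mem h x, hfree⟩).val + r :=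
        gfun_free (h := h) (φ := φ0) ⟨blk h x, blk_mem h x, hfree⟩ (mem_blk h x)
      have h2 := freeg ⟨blk h x, blk_mem h x, hfree⟩ _ (hrep ⟨blk h x, blk_mem h x, hfree⟩)
      have h4 : g x = g (h.1 (⟨blk h x, blk_mem h x, hfree⟩ : FreeB 𝒜 r).1
          (⟨blk h x, blk_mem h x, hfree⟩ : FreeB 𝒜 r).2.1).choose :=
        constg (blk h x) (blk_mem h x) x (mem_blk h x) _ (hrep ⟨blk h x, blk_mem h x, hfree⟩)
      rw [h1, hval ⟨blk h x, blk_mem h x, hfree⟩, ← h4]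
      rw [← h4] at h2
      omega

end Bij

section Assemble
variable {N r m : ℕ}

lemma card_Gfix (hrN : r ≤ N) : Nat.card (Gfix N r m) = (m + r) ^ (N - r) := by
  have e : Gfix N r m ≃ ({x : Fin N // ¬ x.val < r} → Fin (m + r)) :=
    { toFun := fun g x => g.1 x.1
      invFun := fun f => ⟨fun x => if hx : x.val < r then
          ⟨x.val, lt_of_lt_of_le hx (Nat.le_add_left r m)⟩ else f ⟨x, hx⟩,
        fun x hx => by simp [dif_pos hx]⟩
      left_inv := fun g => by
        apply Subtype.ext
        funext x
        dsimp only
        split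
        · next hx => exact (Fin.ext (g.2 x hx)).symm
        · rfl
      right_inv := fun f => by
        funext x
        simp [dif_neg x.2] }
  rw [Nat.card_congr e, Nat.card_eq_fintype_card, Fintype.card_fun]
  have e2 : {x : Fin N // x.val < r} ≃ Fin r :=
    { toFun := fun x => ⟨x.1.val, x.2⟩
      invFun := fun i => ⟨⟨i.val, lt_of_lt_of_le i.isLt hrN⟩, i.isLt⟩
      left_inv := fun x => Subtype.ext (Fin.ext rfl)
      right_inv := fun i => rfl }
  congr 1
  · simp
  · rw [Fintype.card_subtype_compl, Fintype.card_congr e2]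
    simp

variable {𝒜 : Finset (Finset (Fin N))}

lemma card_FreeB (h : IsSetPartition 𝒜) (hrN : r ≤ N)
    (hD : DistinctBlocks 𝒜 {x | (x : ℕ) < r}) :
    Nat.card (FreeB 𝒜 r) = 𝒜.card - r := by
  rw [Nat.card_eq_fintype_card, Fintype.card_subtype]
  rw [← card_free h hrN hD]
  congr 1
  ext t
  simp [Finset.mem_filter, and_comm]

lemma card_emb (h : IsSetPartition 𝒜) (hrN : r ≤ N)
    (hD : DistinctBlocks 𝒜 {x | (x : ℕ) < r}) :
    Nat.card (FreeB 𝒜 r ↪ Fin m) = Nat.descFactorial m (𝒜.card - r) := by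
  rw [Nat.card_eq_fintype_card, Fintype.card_embedding_eq, Fintype.card_fin,
    ← Nat.card_eq_fintype_card, card_FreeB h hrN hD]

end Assemble

lemma key_count (n r m : ℕ) :
    (m + r) ^ n = ∑ k ∈ Finset.range (n + 1), rStirling r n k * Nat.descFactorial m k := by
  have hrN : r ≤ n + r := Nat.le_add_left r n
  have hA : Nat.card (Gfix (n + r) r m) = (m + r) ^ n := by
    rw [card_Gfix hrN]
    congr 1
    omega
  set AP := {𝒜 : Finset (Finset (Fin (n + r))) //
    IsSetPartition 𝒜 ∧ DistinctBlocks 𝒜 {x | (x : ℕ) < r}} with hAP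
  set Φ' : Gfix (n + r) r m → AP :=
    fun g => ⟨fibers g.1, fibers_isPartition g.1, fibers_distinct g.1 g.2⟩ with hΦ'
  have hB : Nat.card (Gfix (n + r) r m)
      = ∑ 𝒜 : AP, Nat.card {g : Gfix (n + r) r m // Φ' g = 𝒜} := by
    rw [Nat.card_congr (Equiv.sigmaFiberEquiv Φ').symm, Nat.card_eq_fintype_card,
      Fintype.card_sigma]
    exact Finset.sum_congr rfl fun 𝒜 _ => (Nat.card_eq_fintype_card).symm
  have hC : ∀ 𝒜 : AP, Nat.card {g : Gfix (n + r) r m // Φ' g = 𝒜}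
      = Nat.descFactorial m (𝒜.1.card - r) := by
    intro 𝒜
    rw [Nat.card_congr (Equiv.subtypeEquivRight (fun g => Subtype.ext_iff))]
    rw [card_fiber 𝒜.2.1 𝒜.2.2 hrN, card_emb 𝒜.2.1 hrN 𝒜.2.2]
  rw [← hA, hB]
  rw [Finset.sum_congr rfl fun 𝒜 _ => hC 𝒜]
  rw [← Finset.sum_fiberwise_of_maps_to (g := fun 𝒜 : AP => 𝒜.1.card - r)
    (t := Finset.range (n + 1)) (fun 𝒜 _ => Finset.mem_range.2 (by
      have := card_le 𝒜.2.1
      change 𝒜.1.card - r < n + 1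
      omega))]
  apply Finset.sum_congr rfl
  intro k hk
  rw [Finset.sum_congr rfl (fun 𝒜 h𝒜 => by rw [(Finset.mem_filter.1 h𝒜).2]),
    Finset.sum_const, smul_eq_mul]
  congr 1
  have e : {𝒜 : Finset (Finset (Fin (n + r))) //
      IsSetPartition 𝒜 ∧ 𝒜.card = k + r ∧ DistinctBlocks 𝒜 {x | (x : ℕ) < r}}
      ≃ {𝒜 : AP // 𝒜.1.card - r = k} :=
    { toFun := fun A => ⟨⟨A.1, A.2.1, A.2.2.2⟩, by have := A.2.2.1; show A.1.card - r = k; omega⟩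
      invFun := fun A => ⟨A.1.1, A.1.2.1, by
        have h1 := card_ge A.1.2.1 hrN A.1.2.2
        have h2 : A.1.1.card - r = k := A.2
        omega, A.1.2.2⟩
      left_inv := fun A => rfl
      right_inv := fun A => rfl }
  rw [rStirling, Nat.card_eq_fintype_card, Fintype.card_congr e, Fintype.card_subtype]

lemma desc_summable (j : ℕ) (z : ℝ) :
    Summable (fun k : ℕ => (Nat.descFactorial k j : ℝ) * z ^ k / (Nat.factorial k)) ∧
    ∑' k : ℕ, (Nat.descFactorial k j : ℝ) * z ^ k / (Nat.factorial k) = z ^ j * Real.exp z := by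
  set f : ℕ → ℝ := fun k => (Nat.descFactorial k j : ℝ) * z ^ k / (Nat.factorial k) with hf
  have hshift : ∀ i : ℕ, f (i + j) = z ^ j * (z ^ i / (Nat.factorial i)) := by
    intro i
    have h1 : (Nat.factorial (i + j - j)) * Nat.descFactorial (i + j) j = Nat.factorial (i + j) :=
      Nat.factorial_mul_descFactorial (Nat.le_add_left j i)
    rw [show i + j - j = i from by omega] at h1
    have h2 : (Nat.factorial i : ℝ) ≠ 0 := Nat.cast_ne_zero.2 (Nat.factorial_ne_zero i)
    have h3 : (Nat.factorial (i + j) : ℝ) ≠ 0 := Nat.cast_ne_zero.2 (Nat.factorial_ne_zero _)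
    have h1' : (Nat.factorial i : ℝ) * (Nat.descFactorial (i + j) j : ℝ)
        = (Nat.factorial (i + j) : ℝ) := by exact_mod_cast congrArg (Nat.cast (R := ℝ)) h1
    have hd : (Nat.descFactorial (i + j) j : ℝ) = (Nat.factorial (i + j) : ℝ) / Nat.factorial i := by
      rw [eq_div_iff h2]
      linear_combination h1'
    simp only [hf, hd, pow_add]
    field_simp
  have hs : Summable (fun i : ℕ => f (i + j)) := by
    have := (Real.summable_pow_div_factorial z).mul_left (z ^ j)
    exact this.congr (fun i => (hshift i).symm)
  have hsum : Summable f := (summable_nat_add_iff j).1 hs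
  refine ⟨hsum, ?_⟩
  have hzero : ∑ i ∈ Finset.range j, f i = 0 := by
    apply Finset.sum_eq_zero
    intro i hi
    have : Nat.descFactorial i j = 0 :=
      Nat.descFactorial_eq_zero_iff_lt.2 (Finset.mem_range.1 hi)
    simp [hf, this]
  have htail : ∑' i : ℕ, f (i + j) = z ^ j * Real.exp z := by
    rw [tsum_congr hshift, tsum_mul_left]
    congr 1
    rw [Real.exp_eq_exp_ℝ, NormedSpace.exp_eq_tsum_div]
  rw [← Summable.sum_add_tsum_nat_add j hsum, hzero, htail, zero_add]

lemma rBell_aux (n r : ℕ) (z : ℝ) :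
    Summable (fun k : ℕ => ((k + r : ℕ) : ℝ) ^ n * z ^ k / (Nat.factorial k)) ∧
    (∑ k ∈ Finset.range (n + 1), (rStirling r n k : ℝ) * z ^ k) =
      Real.exp (-z) * ∑' k : ℕ, ((k + r : ℕ) : ℝ) ^ n * z ^ k / (Nat.factorial k) := by
  set f : ℕ → ℝ := fun k => ((k + r : ℕ) : ℝ) ^ n * z ^ k / (Nat.factorial k) with hf
  have hfk : ∀ k : ℕ, f k = ∑ j ∈ Finset.range (n + 1),
      (rStirling r n j : ℝ) * ((Nat.descFactorial k j : ℝ) * z ^ k / (Nat.factorial k)) := by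
    intro k
    have hkey := key_count n r k
    have hcast : ((k + r : ℕ) : ℝ) ^ n
        = ((∑ j ∈ Finset.range (n + 1), rStirling r n j * Nat.descFactorial k j : ℕ) : ℝ) := by
      rw [← hkey]
      push_cast
      ring
    simp only [hf, hcast]
    push_cast
    rw [Finset.sum_mul, Finset.sum_div]
    apply Finset.sum_congr rfl
    intro j _
    ring
  have hsum : Summable f := by
    rw [show f = fun k => ∑ j ∈ Finset.range (n + 1),
      (rStirling r n j : ℝ) * ((Nat.descFactorial k j : ℝ) * z ^ k / (Nat.factorial k))
      from funext hfk]
    exact summable_sum (fun j _ => ((desc_summable j z).1.mul_left _))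
  refine ⟨hsum, ?_⟩
  have htsum : ∑' k : ℕ, f k = ∑ j ∈ Finset.range (n + 1),
      (rStirling r n j : ℝ) * (z ^ j * Real.exp z) := by
    rw [tsum_congr hfk, Summable.tsum_finsetSum (fun j _ => ((desc_summable j z).1.mul_left _))]
    apply Finset.sum_congr rfl
    intro j _
    rw [tsum_mul_left, (desc_summable j z).2]
  rw [htsum]
  rw [Finset.mul_sum]
  apply Finset.sum_congr rfl
  intro j _
  have : Real.exp (-z) * Real.exp z = 1 := by
    rw [← Real.exp_add]
    simp
  calc (rStirling r n j : ℝ) * z ^ j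
      = (Real.exp (-z) * Real.exp z) * ((rStirling r n j : ℝ) * z ^ j) := by rw [this]; ring
    _ = Real.exp (-z) * ((rStirling r n j : ℝ) * (z ^ j * Real.exp z)) := by ring

/-- $B_n(z;r) = e^{-z}\sum_{k\ge 0}(k+r)^n z^k/k!$, the series converging for all real $z$. -/
theorem rBell_exponential_formula (n r : ℕ) (z : ℝ) :
    Summable (fun k : ℕ => ((k + r : ℕ) : ℝ) ^ n * z ^ k / (Nat.factorial k)) ∧
    rBell r n z =
      Real.exp (-z) * ∑' k : ℕ, ((k + r : ℕ) : ℝ) ^ n * z ^ k / (Nat.factorial k) := by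
  exact rBell_aux n r z
end

section
/- For all nonnegative integers n and r, the identity (z+r)^n = Σ_{k=0}^{n} {n+r brace k+r}_r · z(z-1)···(z-k+1) holds as an identity of polynomials in z (equivalently for all real z), where z^{underline k} denotes the falling factorial. -/
open Finset

namespace RS
attribute [local instance] Classical.propDecidable

variable {N : ℕ}

noncomputable def blockOf (𝒜 : Finset (Finset (Fin N))) (h : IsSetPartition 𝒜) (x : Fin N) :
    Finset (Fin N) :=
  Finset.choose (fun t => x ∈ t) 𝒜 (h.2 x)

lemma blockOf_mem (𝒜 : Finset (Finset (Fin N))) (h : IsSetPartition 𝒜) (x : Fin N) :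
    blockOf 𝒜 h x ∈ 𝒜 := Finset.choose_mem _ _ _

lemma mem_blockOf (𝒜 : Finset (Finset (Fin N))) (h : IsSetPartition 𝒜) (x : Fin N) :
    x ∈ blockOf 𝒜 h x := Finset.choose_property (fun t => x ∈ t) 𝒜 (h.2 x)

lemma blockOf_eq (𝒜 : Finset (Finset (Fin N))) (h : IsSetPartition 𝒜) {x : Fin N}
    {t : Finset (Fin N)} (ht : t ∈ 𝒜) (hx : x ∈ t) : blockOf 𝒜 h x = t :=
  (h.2 x).unique ⟨blockOf_mem 𝒜 h x, mem_blockOf 𝒜 h x⟩ ⟨ht, hx⟩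


variable (n r m : ℕ)

def ext (f : Fin n → Fin (m + r)) (x : Fin (n + r)) : Fin (m + r) :=
  if h : (x : ℕ) < r then ⟨x, by omega⟩ else f ⟨(x : ℕ) - r, by have := x.isLt; omega⟩

lemma ext_lo (f : Fin n → Fin (m + r)) (x : Fin (n + r)) (h : (x : ℕ) < r) :
    ext n r m f x = ⟨x, by omega⟩ := dif_pos h

lemma ext_hi (f : Fin n → Fin (m + r)) (x : Fin (n + r)) (h : ¬ (x : ℕ) < r) :
    ext n r m f x = f ⟨(x : ℕ) - r, by have := x.isLt; omega⟩ := dif_neg h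

lemma ext_up (f : Fin n → Fin (m + r)) (x : Fin n) :
    ext n r m f ⟨(x : ℕ) + r, by have := x.isLt; omega⟩ = f x := by
  rw [ext_hi]
  · congr 1; ext; simp
  · simp

noncomputable def induce (f : Fin n → Fin (m + r)) : Finset (Finset (Fin (n + r))) :=
  univ.image (fun x => univ.filter (fun y => ext n r m f y = ext n r m f x))

lemma induce_partition (f : Fin n → Fin (m + r)) : IsSetPartition (induce n r m f) := by
  constructor
  · intro t ht
    simp only [induce, mem_image, mem_univ, true_and] at ht
    obtain ⟨x, rfl⟩ := ht
    exact ⟨x, by simp⟩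
  · intro x
    refine ⟨univ.filter (fun y => ext n r m f y = ext n r m f x), ⟨?_, by simp⟩, ?_⟩
    · exact mem_image_of_mem _ (mem_univ x)
    · rintro t ⟨ht, hx⟩
      simp only [induce, mem_image, mem_univ, true_and] at ht
      obtain ⟨x', rfl⟩ := ht
      simp only [mem_filter, mem_univ, true_and] at hx
      ext y; simp [hx]

lemma blockOf_induce (f : Fin n → Fin (m + r)) (x : Fin (n + r)) :
    blockOf (induce n r m f) (induce_partition n r m f) x
      = univ.filter (fun y => ext n r m f y = ext n r m f x) :=
  blockOf_eq _ _ (mem_image_of_mem _ (mem_univ x)) (by simp)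

lemma induce_distinct (f : Fin n → Fin (m + r)) :
    DistinctBlocks (induce n r m f) {x | (x : ℕ) < r} := by
  rintro a ha b hb hab t ht ⟨hat, hbt⟩
  simp only [induce, mem_image, mem_univ, true_and] at ht
  obtain ⟨x, rfl⟩ := ht
  simp only [mem_filter, mem_univ, true_and] at hat hbt
  rw [ext_lo n r m f a ha, ext_lo n r m f b hb] at *
  apply hab
  have : (a : ℕ) = (b : ℕ) := by
    have := hat.trans hbt.symm
    simpa [Fin.ext_iff] using this
  exact Fin.ext this

noncomputable def free (𝒜 : Finset (Finset (Fin (n + r)))) : Finset (Finset (Fin (n + r))) :=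
  𝒜.filter (fun t => ∀ x ∈ t, r ≤ x.val)

lemma card_free_add (𝒜 : Finset (Finset (Fin (n + r)))) (h : IsSetPartition 𝒜)
    (hd : DistinctBlocks 𝒜 {x | x.val < r}) :
    (free n r 𝒜).card + r = 𝒜.card := by
  have hsplit := Finset.card_filter_add_card_filter_not
    (s := 𝒜) (p := fun t => ∀ x ∈ t, r ≤ x.val)
  rw [free, ← hsplit]
  congr 1
  have himg : 𝒜.filter (fun t => ¬ ∀ x ∈ t, r ≤ x.val)
      = Finset.image (blockOf 𝒜 h)
          (Finset.filter (fun x : Fin (n + r) => x.val < r) Finset.univ) := by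
    ext t
    rw [Finset.mem_filter, Finset.mem_image]
    constructor
    · rintro ⟨ht, hx⟩
      push_neg at hx
      obtain ⟨x, hxt, hxr⟩ := hx
      refine ⟨x, ?_, blockOf_eq 𝒜 h ht hxt⟩
      rw [Finset.mem_filter]
      exact ⟨Finset.mem_univ _, hxr⟩
    · rintro ⟨x, hxr, rfl⟩
      rw [Finset.mem_filter] at hxr
      refine ⟨blockOf_mem 𝒜 h x, ?_⟩
      push_neg
      exact ⟨x, mem_blockOf 𝒜 h x, by omega⟩
  rw [himg, Finset.card_image_of_injOn]
  · have : (Finset.filter (fun x : Fin (n + r) => x.val < r) Finset.univ)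
        = (univ : Finset (Fin r)).image (Fin.castLE (by omega : r ≤ n + r)) := by
      ext x
      rw [Finset.mem_filter, Finset.mem_image]
      constructor
      · rintro ⟨-, hx⟩; exact ⟨⟨x, hx⟩, Finset.mem_univ _, rfl⟩
      · rintro ⟨y, -, rfl⟩; exact ⟨Finset.mem_univ _, y.isLt⟩
    rw [this, Finset.card_image_of_injective _ (Fin.castLE_injective _)]
    simp
  · intro a ha b hb hab
    by_contra hne
    simp only [Finset.coe_filter, Set.mem_setOf_eq, Finset.mem_univ, true_and] at ha hb
    exact hd a ha b hb hne _ (blockOf_mem 𝒜 h b)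
      ⟨hab ▸ mem_blockOf 𝒜 h a, mem_blockOf 𝒜 h b⟩

lemma card_le_of_partition (𝒜 : Finset (Finset (Fin (n + r)))) (h : IsSetPartition 𝒜) :
    𝒜.card ≤ n + r := by
  have : 𝒜.card ≤ (univ : Finset (Fin (n + r))).card := by
    apply Finset.card_le_card_of_surjOn (blockOf 𝒜 h)
    intro t ht
    simp only [Finset.mem_coe] at ht
    obtain ⟨x, hx⟩ := h.1 t ht
    exact ⟨x, Finset.mem_coe.mpr (Finset.mem_univ _), blockOf_eq 𝒜 h ht hx⟩
  simpa using this

lemma free_mem_iff {𝒜 : Finset (Finset (Fin (n + r)))} {t : Finset (Fin (n + r))} :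
    t ∈ free n r 𝒜 ↔ t ∈ 𝒜 ∧ ∀ x ∈ t, r ≤ x.val := Finset.mem_filter

lemma exu_dist {𝒜 : Finset (Finset (Fin (n + r)))} (hd : DistinctBlocks 𝒜 {x | (x : ℕ) < r})
    {t : Finset (Fin (n + r))} (ht : t ∈ 𝒜) (hnf : ¬ ∀ x ∈ t, r ≤ x.val) :
    ∃! x, x ∈ t ∧ x.val < r := by
  push_neg at hnf
  obtain ⟨x, hxt, hxr⟩ := hnf
  refine ⟨x, ⟨hxt, hxr⟩, ?_⟩
  rintro y ⟨hyt, hyr⟩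
  by_contra hne
  exact hd y hyr x hxr hne t ht ⟨hyt, hxt⟩

noncomputable def distOf {𝒜 : Finset (Finset (Fin (n + r)))}
    (hd : DistinctBlocks 𝒜 {x | (x : ℕ) < r}) {t : Finset (Fin (n + r))}
    (ht : t ∈ 𝒜) (hnf : ¬ ∀ x ∈ t, r ≤ x.val) : Fin (n + r) :=
  Finset.choose (fun x => x.val < r) t (exu_dist n r hd ht hnf)

lemma distOf_mem {𝒜 : Finset (Finset (Fin (n + r)))}
    (hd : DistinctBlocks 𝒜 {x | (x : ℕ) < r}) {t : Finset (Fin (n + r))}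
    (ht : t ∈ 𝒜) (hnf : ¬ ∀ x ∈ t, r ≤ x.val) : distOf n r hd ht hnf ∈ t :=
  Finset.choose_mem _ _ _

lemma distOf_lt {𝒜 : Finset (Finset (Fin (n + r)))}
    (hd : DistinctBlocks 𝒜 {x | (x : ℕ) < r}) {t : Finset (Fin (n + r))}
    (ht : t ∈ 𝒜) (hnf : ¬ ∀ x ∈ t, r ≤ x.val) : (distOf n r hd ht hnf).val < r :=
  Finset.choose_property (fun x => x.val < r) t (exu_dist n r hd ht hnf)

lemma distOf_eq {𝒜 : Finset (Finset (Fin (n + r)))}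
    (hd : DistinctBlocks 𝒜 {x | (x : ℕ) < r}) {t : Finset (Fin (n + r))}
    (ht : t ∈ 𝒜) (hnf : ¬ ∀ x ∈ t, r ≤ x.val) {x : Fin (n + r)}
    (hx : x ∈ t) (hxr : x.val < r) : distOf n r hd ht hnf = x :=
  (exu_dist n r hd ht hnf).unique ⟨distOf_mem n r hd ht hnf, distOf_lt n r hd ht hnf⟩ ⟨hx, hxr⟩

variable {𝒜 : Finset (Finset (Fin (n + r)))}

noncomputable def valFun (h : IsSetPartition 𝒜) (hd : DistinctBlocks 𝒜 {x | (x : ℕ) < r})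
    (g : ↥(free n r 𝒜) ↪ Fin m) (y : Fin (n + r)) : Fin (m + r) :=
  if hf : blockOf 𝒜 h y ∈ free n r 𝒜 then
    ⟨r + (g ⟨_, hf⟩).val, by have := (g ⟨_, hf⟩).isLt; omega⟩
  else
    ⟨(distOf n r hd (blockOf_mem 𝒜 h y) (fun hall => hf (free_mem_iff n r |>.mpr
        ⟨blockOf_mem 𝒜 h y, hall⟩))).val,
     by have := distOf_lt n r hd (blockOf_mem 𝒜 h y) (fun hall => hf (free_mem_iff n r |>.mpr
        ⟨blockOf_mem 𝒜 h y, hall⟩)); omega⟩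

noncomputable def Phi (h : IsSetPartition 𝒜) (hd : DistinctBlocks 𝒜 {x | (x : ℕ) < r})
    (g : ↥(free n r 𝒜) ↪ Fin m) (x : Fin n) : Fin (m + r) :=
  valFun n r m h hd g ⟨x.val + r, by have := x.isLt; omega⟩

lemma valFun_inj (h : IsSetPartition 𝒜) (hd : DistinctBlocks 𝒜 {x | (x : ℕ) < r})
    (g : ↥(free n r 𝒜) ↪ Fin m) {y z : Fin (n + r)}
    (hyz : valFun n r m h hd g y = valFun n r m h hd g z) :
    blockOf 𝒜 h y = blockOf 𝒜 h z := by
  unfold valFun at hyz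
  by_cases hfy : blockOf 𝒜 h y ∈ free n r 𝒜 <;>
    by_cases hfz : blockOf 𝒜 h z ∈ free n r 𝒜
  · rw [dif_pos hfy, dif_pos hfz] at hyz
    have : (g ⟨_, hfy⟩) = (g ⟨_, hfz⟩) := by
      apply Fin.ext
      have := congrArg Fin.val hyz
      simp only at this
      omega
    have := g.injective this
    exact congrArg Subtype.val this
  · rw [dif_pos hfy, dif_neg hfz] at hyz
    have h1 := distOf_lt n r hd (blockOf_mem 𝒜 h z) (fun hall => hfz (free_mem_iff n r |>.mpr
        ⟨blockOf_mem 𝒜 h z, hall⟩))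
    have := congrArg Fin.val hyz
    simp only at this
    omega
  · rw [dif_neg hfy, dif_pos hfz] at hyz
    have h1 := distOf_lt n r hd (blockOf_mem 𝒜 h y) (fun hall => hfy (free_mem_iff n r |>.mpr
        ⟨blockOf_mem 𝒜 h y, hall⟩))
    have := congrArg Fin.val hyz
    simp only at this
    omega
  · rw [dif_neg hfy, dif_neg hfz] at hyz
    have := congrArg Fin.val hyz
    simp only at this
    set dy := distOf n r hd (blockOf_mem 𝒜 h y) (fun hall => hfy (free_mem_iff n r |>.mpr
        ⟨blockOf_mem 𝒜 h y, hall⟩)) with hdy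
    set dz := distOf n r hd (blockOf_mem 𝒜 h z) (fun hall => hfz (free_mem_iff n r |>.mpr
        ⟨blockOf_mem 𝒜 h z, hall⟩)) with hdz
    have hde : dy = dz := Fin.ext this
    have hy1 : dy ∈ blockOf 𝒜 h y := distOf_mem n r hd _ _
    have hz1 : dz ∈ blockOf 𝒜 h z := distOf_mem n r hd _ _
    rw [← blockOf_eq 𝒜 h (blockOf_mem 𝒜 h y) hy1, hde,
      blockOf_eq 𝒜 h (blockOf_mem 𝒜 h z) hz1]

lemma valFun_lo (h : IsSetPartition 𝒜) (hd : DistinctBlocks 𝒜 {x | (x : ℕ) < r})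
    (g : ↥(free n r 𝒜) ↪ Fin m) {y : Fin (n + r)} (hy : y.val < r) :
    valFun n r m h hd g y = ⟨y.val, by omega⟩ := by
  have hnf : ¬ blockOf 𝒜 h y ∈ free n r 𝒜 := by
    rw [free_mem_iff]
    rintro ⟨-, hall⟩
    exact absurd (hall y (mem_blockOf 𝒜 h y)) (by omega)
  rw [valFun, dif_neg hnf]
  have hde := distOf_eq n r hd (blockOf_mem 𝒜 h y)
    (fun hall => hnf (free_mem_iff n r |>.mpr ⟨blockOf_mem 𝒜 h y, hall⟩))
    (mem_blockOf 𝒜 h y) hy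
  apply Fin.ext
  simp only
  exact congrArg Fin.val hde

lemma ext_Phi (h : IsSetPartition 𝒜) (hd : DistinctBlocks 𝒜 {x | (x : ℕ) < r})
    (g : ↥(free n r 𝒜) ↪ Fin m) (y : Fin (n + r)) :
    ext n r m (Phi n r m h hd g) y = valFun n r m h hd g y := by
  by_cases hy : y.val < r
  · rw [ext_lo n r m _ y hy, valFun_lo n r m h hd g hy]
  · rw [ext_hi n r m _ y hy, Phi]
    congr 1
    apply Fin.ext
    simp only
    omega

lemma valFun_iff (h : IsSetPartition 𝒜) (hd : DistinctBlocks 𝒜 {x | (x : ℕ) < r})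
    (g : ↥(free n r 𝒜) ↪ Fin m) (y z : Fin (n + r)) :
    valFun n r m h hd g y = valFun n r m h hd g z ↔ blockOf 𝒜 h y = blockOf 𝒜 h z := by
  constructor
  · exact valFun_inj n r m h hd g
  · intro hb
    unfold valFun
    by_cases hfy : blockOf 𝒜 h y ∈ free n r 𝒜
    · rw [dif_pos hfy, dif_pos (hb ▸ hfy)]
      apply Fin.ext
      simp only
      have hsub : (⟨blockOf 𝒜 h y, hfy⟩ : ↥(free n r 𝒜)) = ⟨blockOf 𝒜 h z, hb ▸ hfy⟩ :=
        Subtype.ext hb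
      rw [hsub]
    · rw [dif_neg hfy, dif_neg (hb ▸ hfy)]
      apply Fin.ext
      simp only
      congr 1
      exact (distOf_eq n r hd _ _ (hb ▸ distOf_mem n r hd _ _) (distOf_lt n r hd _ _)).symm

lemma blockOf_mem_eq (h : IsSetPartition 𝒜) {x : Fin (n + r)} {z : Fin (n + r)} :
    z ∈ blockOf 𝒜 h x ↔ blockOf 𝒜 h z = blockOf 𝒜 h x := by
  constructor
  · intro hz
    exact blockOf_eq 𝒜 h (blockOf_mem 𝒜 h x) hz
  · intro he
    exact he ▸ mem_blockOf 𝒜 h z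

lemma image_blockOf (h : IsSetPartition 𝒜) :
    univ.image (blockOf 𝒜 h) = 𝒜 := by
  ext t
  rw [Finset.mem_image]
  constructor
  · rintro ⟨x, -, rfl⟩
    exact blockOf_mem 𝒜 h x
  · intro ht
    obtain ⟨x, hx⟩ := h.1 t ht
    exact ⟨x, Finset.mem_univ _, blockOf_eq 𝒜 h ht hx⟩

lemma induce_Phi (h : IsSetPartition 𝒜) (hd : DistinctBlocks 𝒜 {x | (x : ℕ) < r})
    (g : ↥(free n r 𝒜) ↪ Fin m) :
    induce n r m (Phi n r m h hd g) = 𝒜 := by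
  conv_rhs => rw [← image_blockOf n r h]
  rw [induce]
  apply Finset.image_congr
  intro x _
  ext z
  rw [Finset.mem_filter]
  simp only [Finset.mem_univ, true_and]
  rw [ext_Phi n r m h hd g, ext_Phi n r m h hd g, valFun_iff n r m h hd g,
    blockOf_mem_eq n r h]

lemma induce_block_eq (f : Fin n → Fin (m + r)) {t : Finset (Fin (n + r))}
    (ht : t ∈ induce n r m f) {x : Fin (n + r)} (hx : x ∈ t) :
    t = univ.filter (fun y => ext n r m f y = ext n r m f x) := by
  simp only [induce, Finset.mem_image, Finset.mem_univ, true_and] at ht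
  obtain ⟨w, rfl⟩ := ht
  simp only [Finset.mem_filter, Finset.mem_univ, true_and] at hx
  ext y
  simp only [Finset.mem_filter, Finset.mem_univ, true_and, hx]

lemma induce_const (f : Fin n → Fin (m + r)) {t : Finset (Fin (n + r))}
    (ht : t ∈ induce n r m f) {x y : Fin (n + r)} (hx : x ∈ t) (hy : y ∈ t) :
    ext n r m f x = ext n r m f y := by
  rw [induce_block_eq n r m f ht hy] at hx
  simpa using hx

lemma Phi_injective (h : IsSetPartition 𝒜) (hd : DistinctBlocks 𝒜 {x | (x : ℕ) < r}) :
    Function.Injective (Phi n r m h hd) := by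
  intro g g' hgg
  apply Function.Embedding.ext
  rintro ⟨t, ht⟩
  have ht' := ht
  rw [free_mem_iff] at ht'
  obtain ⟨hta, hfree⟩ := ht'
  obtain ⟨y, hy⟩ := h.1 t hta
  have hyr : r ≤ y.val := hfree y hy
  have hyn : y.val - r < n := by have := y.isLt; omega
  have hyy : (⟨(⟨y.val - r, hyn⟩ : Fin n).val + r, by omega⟩ : Fin (n + r)) = y :=
    Fin.ext (by simp; omega)
  have h1 := congrFun hgg ⟨y.val - r, hyn⟩
  rw [Phi, Phi, hyy] at h1
  have hb : blockOf 𝒜 h y = t := blockOf_eq 𝒜 h hta hy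
  unfold valFun at h1
  rw [dif_pos (hb ▸ ht), dif_pos (hb ▸ ht)] at h1
  have h2 := congrArg Fin.val h1
  simp only at h2
  have h3 : g ⟨blockOf 𝒜 h y, hb ▸ ht⟩ = g' ⟨blockOf 𝒜 h y, hb ▸ ht⟩ := Fin.ext (by omega)
  have hsub : (⟨blockOf 𝒜 h y, hb ▸ ht⟩ : ↥(free n r 𝒜)) = ⟨t, ht⟩ := Subtype.ext hb
  rwa [hsub] at h3

lemma Phi_surjective (h : IsSetPartition 𝒜) (hd : DistinctBlocks 𝒜 {x | (x : ℕ) < r})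
    (f : Fin n → Fin (m + r)) (hf : induce n r m f = 𝒜) :
    ∃ g : ↥(free n r 𝒜) ↪ Fin m, Phi n r m h hd g = f := by
  -- choose a representative element of each block
  have hrep : ∀ t ∈ 𝒜, ∃ x, x ∈ t := fun t ht => h.1 t ht
  -- the value of a free block, minus r
  have hval : ∀ t (ht : t ∈ free n r 𝒜), ∀ x ∈ t, r ≤ (ext n r m f x).val := by
    rintro t ht x hx
    rw [free_mem_iff] at ht
    obtain ⟨hta, hfree⟩ := ht
    by_contra hlt
    push_neg at hlt
    set v := ext n r m f x with hv
    have hd' : (⟨v.val, by have := v.isLt; omega⟩ : Fin (n + r)).val < r := hlt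
    have hextd : ext n r m f ⟨v.val, by have := v.isLt; omega⟩ = v := by
      rw [ext_lo n r m f _ hlt]
    have htf : t ∈ induce n r m f := hf ▸ hta
    have hblock := induce_block_eq n r m f htf hx
    have hmem : (⟨v.val, by have := v.isLt; omega⟩ : Fin (n + r)) ∈ t := by
      rw [hblock]
      simp only [Finset.mem_filter, Finset.mem_univ, true_and]
      rw [hextd]
    have := hfree _ hmem
    simp only at this
    omega
  classical
  -- define g
  set g0 : ↥(free n r 𝒜) → Fin m := fun t =>
    ⟨(ext n r m f (hrep t.1 (Finset.mem_filter.mp t.2).1).choose).val - r, by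
      have h1 := hval t.1 t.2 _ (hrep t.1 (Finset.mem_filter.mp t.2).1).choose_spec
      have h2 := (ext n r m f (hrep t.1 (Finset.mem_filter.mp t.2).1).choose).isLt
      omega⟩ with hg0
  have hg0inj : Function.Injective g0 := by
    rintro ⟨t1, ht1⟩ ⟨t2, ht2⟩ h12
    have e1 := (hrep t1 (Finset.mem_filter.mp ht1).1).choose_spec
    have e2 := (hrep t2 (Finset.mem_filter.mp ht2).1).choose_spec
    set x1 := (hrep t1 (Finset.mem_filter.mp ht1).1).choose
    set x2 := (hrep t2 (Finset.mem_filter.mp ht2).1).choose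
    have hv1 := hval t1 ht1 x1 e1
    have hv2 := hval t2 ht2 x2 e2
    have h12' : (g0 ⟨t1, ht1⟩).val = (g0 ⟨t2, ht2⟩).val := congrArg Fin.val h12
    have hr1 : (g0 ⟨t1, ht1⟩).val = (ext n r m f x1).val - r := rfl
    have hr2 : (g0 ⟨t2, ht2⟩).val = (ext n r m f x2).val - r := rfl
    have hvv : ext n r m f x1 = ext n r m f x2 := Fin.ext (by omega)
    have ht1' : t1 ∈ induce n r m f := hf ▸ (Finset.mem_filter.mp ht1).1
    have ht2' : t2 ∈ induce n r m f := hf ▸ (Finset.mem_filter.mp ht2).1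
    have hx2t1 : x2 ∈ t1 := by
      rw [induce_block_eq n r m f ht1' e1]
      simp only [Finset.mem_filter, Finset.mem_univ, true_and]
      exact hvv.symm
    apply Subtype.ext
    show t1 = t2
    rw [induce_block_eq n r m f ht1' hx2t1, ← induce_block_eq n r m f ht2' e2]
  refine ⟨⟨g0, hg0inj⟩, ?_⟩
  funext x
  rw [Phi]
  set y : Fin (n + r) := ⟨x.val + r, by have := x.isLt; omega⟩ with hy
  have hexty : ext n r m f y = f x := ext_up n r m f x
  have hby : y ∈ blockOf 𝒜 h y := mem_blockOf 𝒜 h y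
  have hbA : blockOf 𝒜 h y ∈ 𝒜 := blockOf_mem 𝒜 h y
  have hbi : blockOf 𝒜 h y ∈ induce n r m f := hf ▸ hbA
  unfold valFun
  by_cases hfb : blockOf 𝒜 h y ∈ free n r 𝒜
  · rw [dif_pos hfb]
    simp only [Function.Embedding.coeFn_mk, hg0]
    have e1 := (hrep _ (Finset.mem_filter.mp hfb).1).choose_spec
    set x1 := (hrep _ (Finset.mem_filter.mp hfb).1).choose
    have hvv : ext n r m f x1 = ext n r m f y := induce_const n r m f hbi e1 hby
    have hge := hval _ hfb x1 e1
    apply Fin.ext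
    simp only
    rw [hvv, hexty]
    rw [hvv, hexty] at hge
    omega
  · rw [dif_neg hfb]
    set d := distOf n r hd hbA (fun hall => hfb (free_mem_iff n r |>.mpr ⟨hbA, hall⟩)) with hdd
    have hdm : d ∈ blockOf 𝒜 h y := distOf_mem n r hd _ _
    have hdl : d.val < r := distOf_lt n r hd _ _
    have hvv : ext n r m f d = ext n r m f y := induce_const n r m f hbi hdm hby
    rw [ext_lo n r m f d hdl, hexty] at hvv
    apply Fin.ext
    simp only
    rw [← hvv]

lemma card_fiber (h : IsSetPartition 𝒜) (hd : DistinctBlocks 𝒜 {x | (x : ℕ) < r}) :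
    ((univ : Finset (Fin n → Fin (m + r))).filter (fun f => induce n r m f = 𝒜)).card
      = m.descFactorial (free n r 𝒜).card := by
  have hbij : Function.Bijective (fun g : ↥(free n r 𝒜) ↪ Fin m =>
      (⟨Phi n r m h hd g, induce_Phi n r m h hd g⟩ :
        {f : Fin n → Fin (m + r) // induce n r m f = 𝒜})) := by
    constructor
    · intro g g' hgg
      exact Phi_injective n r m h hd (congrArg Subtype.val hgg)
    · rintro ⟨f, hf⟩
      obtain ⟨g, hg⟩ := Phi_surjective n r m h hd f hf
      exact ⟨g, Subtype.ext hg⟩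
  have h1 : Fintype.card {f : Fin n → Fin (m + r) // induce n r m f = 𝒜}
      = Fintype.card (↥(free n r 𝒜) ↪ Fin m) := (Fintype.card_of_bijective hbij).symm
  rw [Fintype.card_embedding_eq, Fintype.card_fin, Fintype.card_coe] at h1
  rw [← h1, Fintype.card_subtype]

end RS

open RS in
lemma rStirling_eq_card (r n k : ℕ) [DecidablePred (fun 𝒜 : Finset (Finset (Fin (n + r))) =>
      IsSetPartition 𝒜 ∧ 𝒜.card = k + r ∧ DistinctBlocks 𝒜 {x | (x : ℕ) < r})] :
    rStirling r n k = ((univ : Finset (Finset (Finset (Fin (n + r))))).filter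
      (fun 𝒜 => IsSetPartition 𝒜 ∧ 𝒜.card = k + r ∧
        DistinctBlocks 𝒜 {x | (x : ℕ) < r})).card := by
  rw [rStirling, Nat.card_eq_fintype_card, Fintype.card_subtype]

open RS in
lemma key_identity (n r m : ℕ) :
    (m + r) ^ n = ∑ k ∈ range (n + 1), rStirling r n k * m.descFactorial k := by
  classical
  set P : Finset (Finset (Finset (Fin (n + r)))) :=
    univ.filter (fun 𝒜 => IsSetPartition 𝒜 ∧ DistinctBlocks 𝒜 {x | (x : ℕ) < r}) with hP
  have h0 : (m + r) ^ n = (univ : Finset (Fin n → Fin (m + r))).card := by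
    rw [Finset.card_univ]
    simp [Fintype.card_fun]
  have hmaps : ∀ f ∈ (univ : Finset (Fin n → Fin (m + r))), induce n r m f ∈ P := by
    intro f _
    rw [hP, Finset.mem_filter]
    exact ⟨Finset.mem_univ _, induce_partition n r m f, induce_distinct n r m f⟩
  have h1 := Finset.card_eq_sum_card_fiberwise hmaps
  rw [h0, h1]
  have h2 : ∀ 𝒜 ∈ P, ((univ : Finset (Fin n → Fin (m + r))).filter
      (fun f => induce n r m f = 𝒜)).card = m.descFactorial (free n r 𝒜).card := by
    intro 𝒜 h𝒜
    rw [hP, Finset.mem_filter] at h𝒜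
    exact card_fiber n r m h𝒜.2.1 h𝒜.2.2
  rw [Finset.sum_congr rfl h2]
  have hmaps2 : ∀ 𝒜 ∈ P, (free n r 𝒜).card ∈ range (n + 1) := by
    intro 𝒜 h𝒜
    rw [hP, Finset.mem_filter] at h𝒜
    have hc := card_free_add n r 𝒜 h𝒜.2.1 h𝒜.2.2
    have hle := card_le_of_partition n r 𝒜 h𝒜.2.1
    rw [Finset.mem_range]
    omega
  rw [← Finset.sum_fiberwise_of_maps_to hmaps2 (fun 𝒜 => m.descFactorial (free n r 𝒜).card)]
  apply Finset.sum_congr rfl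
  intro k hk
  have h3 : ∀ 𝒜 ∈ P.filter (fun 𝒜 => (free n r 𝒜).card = k),
      m.descFactorial (free n r 𝒜).card = m.descFactorial k := by
    intro 𝒜 h𝒜
    rw [Finset.mem_filter] at h𝒜
    rw [h𝒜.2]
  rw [Finset.sum_congr rfl h3, Finset.sum_const, smul_eq_mul]
  congr 1
  rw [rStirling_eq_card]
  congr 1
  ext 𝒜
  rw [Finset.mem_filter, hP, Finset.mem_filter, Finset.mem_filter]
  constructor
  · rintro ⟨⟨-, hpart, hdist⟩, hcard⟩
    have hc := card_free_add n r 𝒜 hpart hdist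
    exact ⟨Finset.mem_univ _, hpart, by omega, hdist⟩
  · rintro ⟨-, hpart, hcard, hdist⟩
    have hc := card_free_add n r 𝒜 hpart hdist
    exact ⟨⟨Finset.mem_univ _, hpart, hdist⟩, by omega⟩

lemma descPochhammer_eval_prod (k : ℕ) (z : ℝ) :
    (descPochhammer ℝ k).eval z = ∏ i ∈ range k, (z - i) := by
  induction k with
  | zero => simp
  | succ k ih => rw [descPochhammer_succ_eval, ih, prod_range_succ]

/-- $(z+r)^n = \sum_{k=0}^n {n+r \brace k+r}_r z^{\underline k}$. -/
theorem pow_eq_sum_rStirling_fallingFactorial (n r : ℕ) (z : ℝ) :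
    (z + r) ^ n =
      ∑ k ∈ range (n + 1), (rStirling r n k : ℝ) * ∏ i ∈ range k, (z - i) := by
  classical
  set p : Polynomial ℝ := (Polynomial.X + Polynomial.C (r : ℝ)) ^ n -
    ∑ k ∈ range (n + 1), Polynomial.C (rStirling r n k : ℝ) * descPochhammer ℝ k with hp
  have hroot : ∀ m : ℕ, p.eval (m : ℝ) = 0 := by
    intro m
    have hm : (((m + r) ^ n : ℕ) : ℝ)
        = ((∑ k ∈ range (n + 1), rStirling r n k * m.descFactorial k : ℕ) : ℝ) := by
      exact_mod_cast congrArg (Nat.cast (R := ℝ)) (key_identity n r m)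
    push_cast at hm
    simp only [hp, Polynomial.eval_sub, Polynomial.eval_pow, Polynomial.eval_add,
      Polynomial.eval_X, Polynomial.eval_C, Polynomial.eval_finset_sum, Polynomial.eval_mul,
      descPochhammer_eval_eq_descFactorial, sub_eq_zero]
    exact hm
  have hzero : p = 0 := by
    apply Polynomial.eq_zero_of_infinite_isRoot
    apply Set.infinite_of_injective_forall_mem (f := fun m : ℕ => (m : ℝ)) Nat.cast_injective
    intro m
    exact hroot m
  have h4 : p.eval z = 0 := by rw [hzero]; simp
  simp only [hp, Polynomial.eval_sub, Polynomial.eval_pow, Polynomial.eval_add,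
    Polynomial.eval_X, Polynomial.eval_C, Polynomial.eval_finset_sum, Polynomial.eval_mul,
    descPochhammer_eval_prod, sub_eq_zero] at h4
  exact h4
end

section
/- For nonnegative integers n, r1, r2 with r1 ≤ r2, the (r1,r2)-Bell polynomial satisfies B_n(z; r1, r2) = exp(-z) · Σ_{k≥0} (k+r2)^n · (k+r2)(k+r2-1)···(k+r2-r1+1) · z^k/k! (as a convergent series identity for all real z). -/
open Finset

/-!
Fix `m` and count the maps `f : Fin (n + r₁ + r₂) → Fin (m + r₂)` that are injective on the
first `r₁` points and on the next `r₂` points. Directly, there are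
`(m + r₂)^{\underline{r₁}} (m + r₂)^{\underline{r₂}} (m + r₂)^n` of them. On the other hand, `f` is
injective on a set exactly when that set lies in distinct blocks of the partition into fibres of
`f`, and the maps with a given such partition of `j + r₂` blocks correspond to injections of the
blocks, so there are `(m + r₂)^{\underline{j + r₂}} = (m + r₂)^{\underline{r₂}} m^{\underline{j}}`
of them. Cancelling `(m + r₂)^{\underline{r₂}}` gives
`(m + r₂)^n (m + r₂)^{\underline{r₁}} = ∑ⱼ {n+r₁+r₂ brace j+r₂}_{r₁,r₂} m^{\underline{j}}`, and
`∑ₘ m^{\underline{j}} z^m / m! = z^j e^z` turns this into the exponential formula.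
-/

namespace IsSetPartition

variable {N : ℕ} {𝒜 : Finset (Finset (Fin N))}

theorem eq_of_mem (h : IsSetPartition 𝒜) {t t' : Finset (Fin N)} {x : Fin N} (ht : t ∈ 𝒜)
    (ht' : t' ∈ 𝒜) (hx : x ∈ t) (hx' : x ∈ t') : t = t' :=
  (h.2 x).unique ⟨ht, hx⟩ ⟨ht', hx'⟩

def block (h : IsSetPartition 𝒜) (x : Fin N) : Finset (Fin N) := 𝒜.choose (x ∈ ·) (h.2 x)

theorem block_mem (h : IsSetPartition 𝒜) (x : Fin N) : h.block x ∈ 𝒜 := Finset.choose_mem _ _ _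

theorem mem_block (h : IsSetPartition 𝒜) (x : Fin N) : x ∈ h.block x :=
  Finset.choose_property (x ∈ ·) _ _

theorem block_eq (h : IsSetPartition 𝒜) {t : Finset (Fin N)} {x : Fin N} (ht : t ∈ 𝒜)
    (hx : x ∈ t) : h.block x = t :=
  h.eq_of_mem (h.block_mem x) ht (h.mem_block x) hx

theorem mem_block_iff (h : IsSetPartition 𝒜) {x y : Fin N} :
    y ∈ h.block x ↔ h.block y = h.block x :=
  ⟨h.block_eq (h.block_mem x), fun hyx => hyx ▸ h.mem_block y⟩

theorem block_min' (h : IsSetPartition 𝒜) {t : Finset (Fin N)} (ht : t ∈ 𝒜) :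
    h.block (t.min' (h.1 t ht)) = t :=
  h.block_eq ht (t.min'_mem _)

theorem image_block (h : IsSetPartition 𝒜) : univ.image h.block = 𝒜 := by
  ext t
  simp only [mem_image, mem_univ, true_and]
  exact ⟨fun ⟨x, hx⟩ => hx ▸ h.block_mem x, fun ht => ⟨_, h.block_min' ht⟩⟩

theorem card_le (h : IsSetPartition 𝒜) : #𝒜 ≤ N := by
  simpa [h.image_block] using card_image_le (s := univ) (f := h.block)

theorem card_le_of_distinctBlocks (h : IsSetPartition 𝒜) {s : Finset (Fin N)}
    (hs : DistinctBlocks 𝒜 s) : #s ≤ #𝒜 := by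
  have hinj : Set.InjOn h.block s := fun x hx y hy hxy => by
    by_contra hne
    exact hs x hx y hy hne _ (h.block_mem y) ⟨hxy ▸ h.mem_block x, h.mem_block y⟩
  rw [← card_image_of_injOn hinj]
  exact card_le_card fun t ht => by
    obtain ⟨x, -, rfl⟩ := mem_image.1 ht
    exact h.block_mem x

end IsSetPartition

section KerPartition

variable {N : ℕ} {β : Type*} [DecidableEq β]

def kerPartition (f : Fin N → β) : Finset (Finset (Fin N)) :=
  univ.image fun x => univ.filter (f · = f x)

theorem mem_kerPartition {f : Fin N → β} {t : Finset (Fin N)} :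
    t ∈ kerPartition f ↔ ∃ x, univ.filter (f · = f x) = t := by
  simp [kerPartition]

theorem isSetPartition_kerPartition (f : Fin N → β) : IsSetPartition (kerPartition f) := by
  refine ⟨?_, fun x => ⟨_, ⟨mem_kerPartition.2 ⟨x, rfl⟩, by simp⟩, ?_⟩⟩
  · intro t ht
    obtain ⟨x, rfl⟩ := mem_kerPartition.1 ht
    exact ⟨x, by simp⟩
  · rintro t ⟨ht, hxt⟩
    obtain ⟨y, rfl⟩ := mem_kerPartition.1 ht
    ext z
    simp_all

theorem distinctBlocks_kerPartition_iff {f : Fin N → β} {S : Set (Fin N)} :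
    DistinctBlocks (kerPartition f) S ↔ S.InjOn f := by
  simp only [DistinctBlocks, mem_kerPartition, forall_exists_index, forall_apply_eq_imp_iff,
    mem_filter, mem_univ, true_and]
  constructor
  · intro hS a ha b hb hab
    by_contra hne
    exact hS a ha b hb hne a ⟨rfl, hab.symm⟩
  · rintro hS a ha b hb hne x ⟨hax, hbx⟩
    exact hne (hS ha hb (hax.trans hbx.symm))

namespace IsSetPartition

variable {𝒜 : Finset (Finset (Fin N))}

theorem mem_block_iff_of_kerPartition_eq (h : IsSetPartition 𝒜) {f : Fin N → β}
    (hf : kerPartition f = 𝒜) {x y : Fin N} : y ∈ h.block x ↔ f y = f x := by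
  rw [h.block_eq (hf ▸ mem_kerPartition.2 ⟨x, rfl⟩) (by simp)]
  simp

def kerPartitionEquiv (h : IsSetPartition 𝒜) : {f : Fin N → β // kerPartition f = 𝒜} ≃ (𝒜 ↪ β) where
  toFun f := ⟨fun t => f.1 (t.1.min' (h.1 t t.2)), fun t t' htt' => Subtype.ext <| by
    have hmem := (h.mem_block_iff_of_kerPartition_eq f.2).2 htt'
    rw [h.mem_block_iff, h.block_min' t.2, h.block_min' t'.2] at hmem
    exact hmem⟩
  invFun g := ⟨fun x => g ⟨h.block x, h.block_mem x⟩, by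
    have hfiber (x : Fin N) :
        univ.filter (fun y => g ⟨h.block y, h.block_mem y⟩ = g ⟨h.block x, h.block_mem x⟩)
          = h.block x := by
      ext y
      simp [h.mem_block_iff]
    simp only [kerPartition, hfiber, h.image_block]⟩
  left_inv f := by
    ext x
    exact (h.mem_block_iff_of_kerPartition_eq f.2).1 ((h.block x).min'_mem _)
  right_inv g := by
    ext t
    exact congrArg g (Subtype.ext (h.block_min' t.2))

end IsSetPartition

end KerPartition

open Classical in
theorem card_subtype_kerPartition_eq_sum {N : ℕ} {β : Type*} [Fintype β] [DecidableEq β]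
    (Φ : Finset (Finset (Fin N)) → Prop) :
    Nat.card {f : Fin N → β // Φ (kerPartition f)}
      = ∑ 𝒜 with IsSetPartition 𝒜 ∧ Φ 𝒜, (Fintype.card β).descFactorial #𝒜 := by
  rw [Nat.card_eq_fintype_card, Fintype.card_subtype,
    card_eq_sum_card_fiberwise (f := kerPartition)
      (t := univ.filter fun 𝒜 => IsSetPartition 𝒜 ∧ Φ 𝒜) fun f hf =>
      mem_filter.2 ⟨mem_univ _, isSetPartition_kerPartition f, (mem_filter.1 hf).2⟩]
  refine sum_congr rfl fun 𝒜 h𝒜 => ?_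
  obtain ⟨h, hΦ⟩ := (mem_filter.1 h𝒜).2
  rw [filter_filter, filter_congr fun f _ =>
      and_iff_right_of_imp fun (hf : kerPartition f = 𝒜) => hf ▸ hΦ,
    ← Fintype.card_subtype, Fintype.card_congr h.kerPartitionEquiv, Fintype.card_embedding_eq,
    Fintype.card_coe]

section InjOn

variable {α β : Type*} [Fintype α] [DecidableEq α] [Fintype β] {s t : Finset α}

def injOnInjOnEquiv (hst : Disjoint s t) :
    {f : α → β // Set.InjOn f s ∧ Set.InjOn f t}
      ≃ (s ↪ β) × (t ↪ β) × ({x // x ∉ s ∧ x ∉ t} → β) where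
  toFun f := (⟨fun x => f.1 x, fun x y hxy => Subtype.ext (f.2.1 x.2 y.2 hxy)⟩,
    ⟨fun x => f.1 x, fun x y hxy => Subtype.ext (f.2.2 x.2 y.2 hxy)⟩, fun x => f.1 x)
  invFun g := ⟨fun x => if hs : x ∈ s then g.1 ⟨x, hs⟩ else if ht : x ∈ t then g.2.1 ⟨x, ht⟩
      else g.2.2 ⟨x, hs, ht⟩, by
    constructor
    · intro x hx y hy hxy
      simp only [Finset.mem_coe] at hx hy
      simpa [hx, hy] using hxy
    · intro x hx y hy hxy
      simp only [Finset.mem_coe] at hx hy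
      simpa [hx, hy, disjoint_right.1 hst hx, disjoint_right.1 hst hy] using hxy⟩
  left_inv f := by
    ext x
    dsimp only
    split_ifs <;> rfl
  right_inv g := by
    ext x
    · simp
    · simp [disjoint_right.1 hst x.2]
    · simp [x.2.1, x.2.2]

theorem card_injOn_injOn (hst : Disjoint s t) :
    Nat.card {f : α → β // Set.InjOn f s ∧ Set.InjOn f t}
      = (Fintype.card β).descFactorial #s * (Fintype.card β).descFactorial #t
        * Fintype.card β ^ (Fintype.card α - #s - #t) := by
  rw [Nat.card_congr (injOnInjOnEquiv hst), Nat.card_eq_fintype_card, Fintype.card_prod,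
    Fintype.card_prod, Fintype.card_embedding_eq, Fintype.card_embedding_eq, Fintype.card_fun,
    Fintype.card_coe, Fintype.card_coe, Fintype.card_subtype, mul_assoc]
  have hcompl : univ.filter (fun x => x ∉ s ∧ x ∉ t) = (s ∪ t)ᶜ := by ext; simp
  rw [hcompl, card_compl, card_union_of_disjoint hst, Nat.sub_sub]

end InjOn

namespace Fin

theorem card_filter_val_lt_of_le {N r : ℕ} (h : r ≤ N) : #{x : Fin N | (x : ℕ) < r} = r := by
  rw [card_filter_val_lt, min_eq_right h]

theorem card_filter_val_mem_Ico {N a b : ℕ} (h : a + b ≤ N) :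
    #{x : Fin N | a ≤ (x : ℕ) ∧ (x : ℕ) < a + b} = b := by
  have hsdiff : univ.filter (fun x : Fin N => a ≤ (x : ℕ) ∧ (x : ℕ) < a + b)
      = univ.filter (fun x : Fin N => (x : ℕ) < a + b)
        \ univ.filter (fun x : Fin N => (x : ℕ) < a) := by
    ext x
    simp [and_comm]
  have hsub : univ.filter (fun x : Fin N => (x : ℕ) < a)
      ⊆ univ.filter (fun x : Fin N => (x : ℕ) < a + b) := by
    intro x
    simp only [mem_filter, mem_univ, true_and]
    omega
  rw [hsdiff, card_sdiff_of_subset hsub, card_filter_val_lt_of_le h,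
    card_filter_val_lt_of_le (by omega), Nat.add_sub_cancel_left]

end Fin

section RRStirling

variable {n r₁ r₂ : ℕ}

open Classical in
theorem rrStirling_eq_card (k : ℕ) :
    rrStirling r₁ r₂ n k = #{𝒜 : Finset (Finset (Fin (n + r₁ + r₂))) |
      (IsSetPartition 𝒜 ∧ DistinctBlocks 𝒜 {x | (x : ℕ) < r₁} ∧
        DistinctBlocks 𝒜 {x | r₁ ≤ (x : ℕ) ∧ (x : ℕ) < r₁ + r₂}) ∧ #𝒜 = k + r₂} := by
  rw [rrStirling, Nat.card_eq_fintype_card, Fintype.card_subtype]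
  exact congrArg card (filter_congr fun 𝒜 _ => by tauto)

open Classical in
theorem sum_partitions_eq_sum_rrStirling_mul (g : ℕ → ℕ) :
    ∑ 𝒜 : Finset (Finset (Fin (n + r₁ + r₂))) with IsSetPartition 𝒜 ∧
        DistinctBlocks 𝒜 {x | (x : ℕ) < r₁} ∧
        DistinctBlocks 𝒜 {x | r₁ ≤ (x : ℕ) ∧ (x : ℕ) < r₁ + r₂}, g #𝒜
      = ∑ j ∈ range (n + r₁ + 1), rrStirling r₁ r₂ n j * g (j + r₂) := by
  have hbounds : ∀ 𝒜 : Finset (Finset (Fin (n + r₁ + r₂))), IsSetPartition 𝒜 →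
      DistinctBlocks 𝒜 {x | r₁ ≤ (x : ℕ) ∧ (x : ℕ) < r₁ + r₂} →
        r₂ ≤ #𝒜 ∧ #𝒜 ≤ n + r₁ + r₂ := by
    intro 𝒜 h hmid
    refine ⟨?_, h.card_le⟩
    rw [← coe_filter_univ] at hmid
    simpa [Fin.card_filter_val_mem_Ico (by omega : r₁ + r₂ ≤ n + r₁ + r₂)] using
      h.card_le_of_distinctBlocks hmid
  have hmaps : ∀ 𝒜 ∈ univ.filter (fun 𝒜 : Finset (Finset (Fin (n + r₁ + r₂))) =>
      IsSetPartition 𝒜 ∧ DistinctBlocks 𝒜 {x | (x : ℕ) < r₁} ∧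
        DistinctBlocks 𝒜 {x | r₁ ≤ (x : ℕ) ∧ (x : ℕ) < r₁ + r₂}),
      #𝒜 - r₂ ∈ range (n + r₁ + 1) := by
    intro 𝒜 h𝒜
    obtain ⟨h, -, hmid⟩ := (mem_filter.1 h𝒜).2
    have := hbounds 𝒜 h hmid
    rw [mem_range]
    omega
  rw [← sum_fiberwise_of_maps_to hmaps]
  refine sum_congr rfl fun j _ => ?_
  rw [filter_filter, rrStirling_eq_card, ← smul_eq_mul, ← sum_const]
  refine sum_congr (filter_congr fun 𝒜 _ => ?_) fun 𝒜 h𝒜 => by rw [(mem_filter.1 h𝒜).2.2]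
  refine and_congr_right fun ⟨h, _, hmid⟩ => ?_
  have := hbounds 𝒜 h hmid
  omega

end RRStirling

open Classical in
theorem pow_mul_descFactorial_eq_sum_rrStirling (n r₁ r₂ m : ℕ) :
    (m + r₂) ^ n * (m + r₂).descFactorial r₁
      = ∑ j ∈ range (n + r₁ + 1), rrStirling r₁ r₂ n j * m.descFactorial j := by
  set low := univ.filter fun x : Fin (n + r₁ + r₂) => (x : ℕ) < r₁
  set mid := univ.filter fun x : Fin (n + r₁ + r₂) => r₁ ≤ (x : ℕ) ∧ (x : ℕ) < r₁ + r₂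
  have hdisj : Disjoint low mid := disjoint_filter.2 fun x _ hx hx' => by omega
  have hcount :
      Nat.card {f : Fin (n + r₁ + r₂) → Fin (m + r₂) // Set.InjOn f low ∧ Set.InjOn f mid}
        = (m + r₂).descFactorial r₂ * ((m + r₂) ^ n * (m + r₂).descFactorial r₁) := by
    rw [card_injOn_injOn hdisj, Fin.card_filter_val_lt_of_le (by omega),
      Fin.card_filter_val_mem_Ico (by omega), Fintype.card_fin, Fintype.card_fin,
      show n + r₁ + r₂ - r₁ - r₂ = n by omega]
    ring
  have hpartition :
      Nat.card {f : Fin (n + r₁ + r₂) → Fin (m + r₂) // Set.InjOn f low ∧ Set.InjOn f mid}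
        = ∑ j ∈ range (n + r₁ + 1), rrStirling r₁ r₂ n j * (m + r₂).descFactorial (j + r₂) := by
    simp only [low, mid, coe_filter_univ, ← distinctBlocks_kerPartition_iff]
    rw [card_subtype_kerPartition_eq_sum (fun 𝒜 => DistinctBlocks 𝒜 {x | (x : ℕ) < r₁} ∧
      DistinctBlocks 𝒜 {x | r₁ ≤ (x : ℕ) ∧ (x : ℕ) < r₁ + r₂}), Fintype.card_fin]
    -- the two filters are decided by different classical instances
    convert sum_partitions_eq_sum_rrStirling_mul _
  have hfactor (j : ℕ) : (m + r₂).descFactorial (j + r₂)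
      = m.descFactorial j * (m + r₂).descFactorial r₂ := by
    simpa using (Nat.descFactorial_mul_descFactorial (n := m + r₂) (Nat.le_add_left r₂ j)).symm
  refine Nat.eq_of_mul_eq_mul_left (Nat.descFactorial_pos.2 (Nat.le_add_left r₂ m)) ?_
  rw [← hcount, hpartition, mul_sum]
  simp only [hfactor]
  exact sum_congr rfl fun j _ => by ring

open Nat in
theorem hasSum_descFactorial_mul_pow_div_factorial (j : ℕ) (z : ℝ) :
    HasSum (fun k : ℕ => (k.descFactorial j : ℝ) * z ^ k / k !) (z ^ j * Real.exp z) := by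
  have shifted (k : ℕ) :
      ((k + j).descFactorial j : ℝ) * z ^ (k + j) / (k + j)! = z ^ j * (z ^ k / k !) := by
    rw [← Nat.factorial_mul_descFactorial (Nat.le_add_left j k), Nat.add_sub_cancel]
    push_cast
    field_simp
    ring
  have hexp : HasSum (fun k : ℕ => z ^ k / k !) (Real.exp z) := by
    simpa [Real.exp_eq_exp_ℝ] using NormedSpace.expSeries_div_hasSum_exp (z : ℝ)
  rw [← hasSum_nat_add_iff' j, sum_eq_zero fun k hk => by
    simp [Nat.descFactorial_eq_zero_iff_lt.2 (mem_range.1 hk)], sub_zero]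
  simpa only [shifted] using hexp.mul_left (z ^ j)

theorem prod_range_sub_eq_descFactorial (x r : ℕ) :
    ∏ i ∈ range r, ((x : ℝ) - i) = x.descFactorial r := by
  rw [← descPochhammer_eval_eq_prod_range, descPochhammer_eval_eq_descFactorial]

theorem rrBell_exponential_formula_general (n r₁ r₂ : ℕ) (z : ℝ) :
    Summable (fun k : ℕ =>
      ((k + r₂ : ℕ) : ℝ) ^ n * (∏ i ∈ range r₁, (((k + r₂ : ℕ) : ℝ) - i)) * z ^ k /
        (Nat.factorial k)) ∧
    rrBell r₁ r₂ n z =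
      Real.exp (-z) * ∑' k : ℕ,
        ((k + r₂ : ℕ) : ℝ) ^ n * (∏ i ∈ range r₁, (((k + r₂ : ℕ) : ℝ) - i)) * z ^ k /
          (Nat.factorial k) := by
  have hterm (k : ℕ) : ((k + r₂ : ℕ) : ℝ) ^ n * (∏ i ∈ range r₁, (((k + r₂ : ℕ) : ℝ) - i))
      * z ^ k / k.factorial = ∑ j ∈ range (n + r₁ + 1),
        (rrStirling r₁ r₂ n j : ℝ) * ((k.descFactorial j : ℝ) * z ^ k / k.factorial) := by
    rw [prod_range_sub_eq_descFactorial, mul_div_assoc, ← Nat.cast_pow, ← Nat.cast_mul,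
      pow_mul_descFactorial_eq_sum_rrStirling, Nat.cast_sum, sum_mul]
    push_cast
    exact sum_congr rfl fun j _ => by ring
  have hsum : HasSum (fun k : ℕ => ((k + r₂ : ℕ) : ℝ) ^ n
      * (∏ i ∈ range r₁, (((k + r₂ : ℕ) : ℝ) - i)) * z ^ k / k.factorial)
      (∑ j ∈ range (n + r₁ + 1), (rrStirling r₁ r₂ n j : ℝ) * (z ^ j * Real.exp z)) := by
    simp only [hterm]
    exact hasSum_sum fun j _ => (hasSum_descFactorial_mul_pow_div_factorial j z).mul_left _
  refine ⟨hsum.summable, ?_⟩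
  rw [hsum.tsum_eq, rrBell, mul_sum]
  refine sum_congr rfl fun j _ => ?_
  rw [Real.exp_neg]
  field_simp

/-- $B_n(z;r_1,r_2)=e^{-z}\sum_{k\ge0}(k+r_2)^n (k+r_2)^{\underline{r_1}} z^k/k!$. -/
theorem rrBell_exponential_formula (n r₁ r₂ : ℕ) (h : r₁ ≤ r₂) (z : ℝ) :
    Summable (fun k : ℕ =>
      ((k + r₂ : ℕ) : ℝ) ^ n * (∏ i ∈ range r₁, (((k + r₂ : ℕ) : ℝ) - i)) * z ^ k /
        (Nat.factorial k)) ∧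
    rrBell r₁ r₂ n z =
      Real.exp (-z) * ∑' k : ℕ,
        ((k + r₂ : ℕ) : ℝ) ^ n * (∏ i ∈ range r₁, (((k + r₂ : ℕ) : ℝ) - i)) * z ^ k /
          (Nat.factorial k) :=
  rrBell_exponential_formula_general n r₁ r₂ z
end

section
/- For nonnegative integers n, r1, r2 with r1 ≤ r2, the sequence of (r1,r2)-Stirling numbers k ↦ {n+r1+r2 brace k+r2}_{r1,r2} for 0 ≤ k ≤ n+r1 is strongly log-concave: for 1 ≤ k ≤ n+r1-1, ({n+r1+r2 brace k+r2})^2 ≥ {n+r1+r2 brace k+1+r2} · {n+r1+r2 brace k-1+r2} (all with the (r1,r2) restriction), and in particular the sequence is unimodal. -/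
open Finset

-- Auxiliary development ------------------------------------------------------

namespace RRAux
variable {M : ℕ}

def Q (C₁ C₂ s : Finset (Fin M)) (m : ℕ) (𝒜 : Finset (Finset (Fin M))) : Prop :=
  (∀ t ∈ 𝒜, t.Nonempty) ∧ (∀ t ∈ 𝒜, t ⊆ s) ∧ (∀ x ∈ s, ∃! t, t ∈ 𝒜 ∧ x ∈ t) ∧
  𝒜.card = m ∧ DistinctBlocks 𝒜 ↑C₁ ∧ DistinctBlocks 𝒜 ↑C₂

def Kx (C₁ C₂ : Finset (Fin M)) (x : Fin M) : Finset (Fin M) :=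
  if x ∈ C₁ then C₁.erase x else if x ∈ C₂ then C₂.erase x else ∅

lemma db_subset {𝒜 ℬ : Finset (Finset (Fin M))} {S : Set (Fin M)} (h : 𝒜 ⊆ ℬ)
    (hD : DistinctBlocks ℬ S) : DistinctBlocks 𝒜 S :=
  fun a ha b hb hab t ht => hD a ha b hb hab t (h ht)

lemma db_insert {𝒜 : Finset (Finset (Fin M))} {S : Set (Fin M)} {t : Finset (Fin M)}
    (hD : DistinctBlocks 𝒜 S) (h : ∀ a ∈ S, ∀ b ∈ S, a ≠ b → ¬(a ∈ t ∧ b ∈ t)) :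
    DistinctBlocks (insert t 𝒜) S := by
  intro a ha b hb hab u hu
  rcases mem_insert.1 hu with rfl | hu
  · exact h a ha b hb hab
  · exact hD a ha b hb hab u hu

lemma mem_Kx_of {C₁ C₂ : Finset (Fin M)} {x y : Fin M} (hdisj : Disjoint C₁ C₂)
    {C : Finset (Fin M)} (hC : C = C₁ ∨ C = C₂) (hx : x ∈ C) (hy : y ∈ C) (hne : y ≠ x) :
    y ∈ Kx C₁ C₂ x := by
  unfold Kx
  rcases hC with rfl | rfl
  · rw [if_pos hx]; exact mem_erase.2 ⟨hne, hy⟩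
  · have hx1 : x ∉ C₁ := fun h => (Finset.disjoint_left.1 hdisj h) hx
    rw [if_neg hx1, if_pos hx]; exact mem_erase.2 ⟨hne, hy⟩

lemma of_mem_Kx {C₁ C₂ : Finset (Fin M)} {x y : Fin M} (hy : y ∈ Kx C₁ C₂ x) :
    y ≠ x ∧ ((x ∈ C₁ ∧ y ∈ C₁) ∨ (x ∈ C₂ ∧ y ∈ C₂)) := by
  unfold Kx at hy
  split_ifs at hy with h1 h2
  · exact ⟨(mem_erase.1 hy).1, Or.inl ⟨h1, (mem_erase.1 hy).2⟩⟩
  · exact ⟨(mem_erase.1 hy).1, Or.inr ⟨h2, (mem_erase.1 hy).2⟩⟩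
  · exact absurd hy (notMem_empty y)

lemma x_notMem {C₁ C₂ s : Finset (Fin M)} {x : Fin M} {m : ℕ} {ℬ : Finset (Finset (Fin M))}
    (hQ : Q C₁ C₂ (s.erase x) m ℬ) {t : Finset (Fin M)} (ht : t ∈ ℬ) : x ∉ t :=
  fun hx => (mem_erase.1 (hQ.2.1 t ht hx)).1 rfl

/-- H1: inserting the singleton `{x}`. -/
lemma H1 {C₁ C₂ s : Finset (Fin M)} {x : Fin M} {m : ℕ} {ℬ : Finset (Finset (Fin M))}
    (hx : x ∈ s) (hQ : Q C₁ C₂ (s.erase x) m ℬ) : Q C₁ C₂ s (m + 1) (insert {x} ℬ) := by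
  obtain ⟨hne, hsub, hex, hcard, hD1, hD2⟩ := hQ
  have hxnot : ({x} : Finset (Fin M)) ∉ ℬ := fun h => x_notMem ⟨hne, hsub, hex, hcard, hD1, hD2⟩ h (mem_singleton_self x)
  refine ⟨?_, ?_, ?_, ?_, ?_, ?_⟩
  · intro t ht
    rcases mem_insert.1 ht with rfl | ht
    · exact ⟨x, mem_singleton_self x⟩
    · exact hne t ht
  · intro t ht
    rcases mem_insert.1 ht with rfl | ht
    · simpa using hx
    · exact (hsub t ht).trans (erase_subset x s)
  · intro y hy
    by_cases hyx : y = x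
    · subst hyx
      refine ⟨{y}, ⟨mem_insert_self _ _, mem_singleton_self y⟩, ?_⟩
      rintro t ⟨ht, hyt⟩
      rcases mem_insert.1 ht with rfl | ht
      · rfl
      · exact absurd hyt (x_notMem ⟨hne, hsub, hex, hcard, hD1, hD2⟩ ht)
    · obtain ⟨t, ⟨ht, hyt⟩, hu⟩ := hex y (mem_erase.2 ⟨hyx, hy⟩)
      refine ⟨t, ⟨mem_insert_of_mem ht, hyt⟩, ?_⟩
      rintro t' ⟨ht', hyt'⟩
      rcases mem_insert.1 ht' with rfl | ht'
      · exact absurd (mem_singleton.1 hyt') hyx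
      · exact hu t' ⟨ht', hyt'⟩
  · rw [card_insert_of_notMem hxnot, hcard]
  · exact db_insert hD1 (fun a _ b _ hab h =>
      hab ((mem_singleton.1 h.1).trans (mem_singleton.1 h.2).symm))
  · exact db_insert hD2 (fun a _ b _ hab h =>
      hab ((mem_singleton.1 h.1).trans (mem_singleton.1 h.2).symm))

/-- H3: removing the singleton `{x}`. -/
lemma H3 {C₁ C₂ s : Finset (Fin M)} {x : Fin M} {m : ℕ} {𝒜 : Finset (Finset (Fin M))}
    (hx : x ∈ s) (hQ : Q C₁ C₂ s (m + 1) 𝒜) (hmem : ({x} : Finset (Fin M)) ∈ 𝒜) :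
    Q C₁ C₂ (s.erase x) m (𝒜.erase {x}) := by
  obtain ⟨hne, hsub, hex, hcard, hD1, hD2⟩ := hQ
  refine ⟨fun t ht => hne t (mem_of_mem_erase ht), ?_, ?_, ?_,
    db_subset (erase_subset _ _) hD1, db_subset (erase_subset _ _) hD2⟩
  · intro t ht y hyt
    have ht' := mem_of_mem_erase ht
    refine mem_erase.2 ⟨?_, hsub t ht' hyt⟩
    rintro rfl
    obtain ⟨u, _, hu⟩ := hex y hx
    exact (mem_erase.1 ht).1 ((hu t ⟨ht', hyt⟩).trans (hu {y} ⟨hmem, mem_singleton_self y⟩).symm)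
  · intro y hy
    obtain ⟨hyx, hys⟩ := mem_erase.1 hy
    obtain ⟨t, ⟨ht, hyt⟩, hu⟩ := hex y hys
    have htx : t ≠ {x} := fun h => hyx (by simpa [h] using hyt)
    refine ⟨t, ⟨mem_erase.2 ⟨htx, ht⟩, hyt⟩, ?_⟩
    rintro t' ⟨ht', hyt'⟩
    exact hu t' ⟨mem_of_mem_erase ht', hyt'⟩
  · rw [card_erase_of_mem hmem, hcard]
    rfl


noncomputable def cnt (C₁ C₂ s : Finset (Fin M)) (m : ℕ) : ℕ :=
  Nat.card {𝒜 : Finset (Finset (Fin M)) // Q C₁ C₂ s m 𝒜}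

lemma block_unique {C₁ C₂ s : Finset (Fin M)} {m : ℕ} {𝒜 : Finset (Finset (Fin M))}
    (hQ : Q C₁ C₂ s m 𝒜) {x : Fin M} (hx : x ∈ s) {t t' : Finset (Fin M)}
    (ht : t ∈ 𝒜) (ht' : t' ∈ 𝒜) (hxt : x ∈ t) (hxt' : x ∈ t') : t = t' := by
  obtain ⟨u, _, hu⟩ := hQ.2.2.1 x hx
  rw [hu t ⟨ht, hxt⟩, hu t' ⟨ht', hxt'⟩]

lemma db_mono_set {𝒜 : Finset (Finset (Fin M))} {S S' : Set (Fin M)} (h : S ⊆ S')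
    (hD : DistinctBlocks 𝒜 S') : DistinctBlocks 𝒜 S :=
  fun a ha b hb hab t ht => hD a (h ha) b (h hb) hab t ht

lemma db_Kx {C₁ C₂ : Finset (Fin M)} {𝒜 : Finset (Finset (Fin M))} (x : Fin M)
    (hD1 : DistinctBlocks 𝒜 ↑C₁) (hD2 : DistinctBlocks 𝒜 ↑C₂) :
    DistinctBlocks 𝒜 ↑(Kx C₁ C₂ x) := by
  unfold Kx
  split_ifs
  · exact db_mono_set (by simp [Finset.erase_subset]) hD1
  · exact db_mono_set (by simp [Finset.erase_subset]) hD2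
  · intro a ha
    simp at ha

/-- the block `T.erase x` is not already present -/
lemma Bnot {C₁ C₂ s : Finset (Fin M)} {x : Fin M} {m : ℕ} {𝒜 : Finset (Finset (Fin M))}
    {T : Finset (Fin M)}
    (hQ : Q C₁ C₂ s m 𝒜) (hT : T ∈ 𝒜) (hxT : x ∈ T) (hTne : T ≠ {x}) :
    T.erase x ∉ 𝒜.erase T := by
  intro h
  have hBne : (T.erase x).Nonempty := by
    rw [Finset.erase_nonempty hxT]
    exact (Finset.nontrivial_iff_ne_singleton hxT).2 hTne
  obtain ⟨y, hy⟩ := hBne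
  obtain ⟨u, _, hu⟩ := hQ.2.2.1 y (hQ.2.1 T hT (mem_of_mem_erase hy))
  exact (mem_erase.1 h).1 (((hu _ ⟨mem_of_mem_erase h, hy⟩)).trans
    (hu T ⟨hT, mem_of_mem_erase hy⟩).symm)

/-- H2: inserting `x` into an allowed block `B`. -/
lemma H2 {C₁ C₂ s : Finset (Fin M)} {x : Fin M} {m : ℕ} {ℬ : Finset (Finset (Fin M))}
    {B : Finset (Fin M)}
    (hx : x ∈ s) (hdisj : Disjoint C₁ C₂) (hQ : Q C₁ C₂ (s.erase x) (m + 1) ℬ)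
    (hB : B ∈ ℬ) (hKB : ∀ y ∈ B, y ∉ Kx C₁ C₂ x) :
    Q C₁ C₂ s (m + 1) (insert (insert x B) (ℬ.erase B)) := by
  obtain ⟨hne, hsub, hex, hcard, hD1, hD2⟩ := hQ
  have hQ' : Q C₁ C₂ (s.erase x) (m + 1) ℬ := ⟨hne, hsub, hex, hcard, hD1, hD2⟩
  have hTnot : insert x B ∉ ℬ.erase B :=
    fun h => x_notMem hQ' (mem_of_mem_erase h) (mem_insert_self x B)
  have hdbnew : ∀ (C : Finset (Fin M)), (C = C₁ ∨ C = C₂) → DistinctBlocks ℬ ↑C →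
      DistinctBlocks (insert (insert x B) (ℬ.erase B)) ↑C := by
    intro C hC hD
    refine db_insert (db_subset (erase_subset _ _) hD) ?_
    intro a ha b hb hab ⟨haB, hbB⟩
    rcases mem_insert.1 haB with h1 | h1
    · rcases mem_insert.1 hbB with h2 | h2
      · exact hab (h1.trans h2.symm)
      · exact hKB b h2 (mem_Kx_of hdisj hC (h1 ▸ ha) hb (fun h => hab (h1.trans h.symm)))
    · rcases mem_insert.1 hbB with h2 | h2
      · exact hKB a h1 (mem_Kx_of hdisj hC (h2 ▸ hb) ha (fun h => hab (h.trans h2.symm)))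
      · exact hD a ha b hb hab B hB ⟨h1, h2⟩
  refine ⟨?_, ?_, ?_, ?_, hdbnew C₁ (Or.inl rfl) hD1, hdbnew C₂ (Or.inr rfl) hD2⟩
  · intro t ht
    rcases mem_insert.1 ht with rfl | ht
    · exact ⟨x, mem_insert_self x B⟩
    · exact hne t (mem_of_mem_erase ht)
  · intro t ht
    rcases mem_insert.1 ht with rfl | ht
    · exact insert_subset hx ((hsub B hB).trans (erase_subset x s))
    · exact (hsub t (mem_of_mem_erase ht)).trans (erase_subset x s)
  · intro y hy
    by_cases hyx : y = x
    · subst hyx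
      refine ⟨insert y B, ⟨mem_insert_self _ _, mem_insert_self y B⟩, ?_⟩
      rintro t ⟨ht, hyt⟩
      rcases mem_insert.1 ht with rfl | ht
      · rfl
      · exact absurd hyt (x_notMem hQ' (mem_of_mem_erase ht))
    · obtain ⟨t, ⟨ht, hyt⟩, hu⟩ := hex y (mem_erase.2 ⟨hyx, hy⟩)
      by_cases htB : t = B
      · subst htB
        refine ⟨insert x t, ⟨mem_insert_self _ _, mem_insert_of_mem hyt⟩, ?_⟩
        rintro t' ⟨ht', hyt'⟩
        rcases mem_insert.1 ht' with rfl | ht'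
        · rfl
        · exact absurd ((hu t' ⟨mem_of_mem_erase ht', hyt'⟩)) (mem_erase.1 ht').1
      · refine ⟨t, ⟨mem_insert_of_mem (mem_erase.2 ⟨htB, ht⟩), hyt⟩, ?_⟩
        rintro t' ⟨ht', hyt'⟩
        rcases mem_insert.1 ht' with rfl | ht'
        · rcases mem_insert.1 hyt' with rfl | hyB
          · exact absurd rfl hyx
          · exact absurd ((hu B ⟨hB, hyB⟩).symm) htB
        · exact hu t' ⟨mem_of_mem_erase ht', hyt'⟩
  · rw [card_insert_of_notMem hTnot, card_erase_of_mem hB, hcard]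
    omega

/-- H4a: removing `x` from its (non-singleton) block. -/
lemma H4 {C₁ C₂ s : Finset (Fin M)} {x : Fin M} {m : ℕ} {𝒜 : Finset (Finset (Fin M))}
    {T : Finset (Fin M)}
    (hx : x ∈ s) (hQ : Q C₁ C₂ s (m + 1) 𝒜) (hT : T ∈ 𝒜) (hxT : x ∈ T) (hTne : T ≠ {x}) :
    Q C₁ C₂ (s.erase x) (m + 1) (insert (T.erase x) (𝒜.erase T)) := by
  obtain ⟨hne, hsub, hex, hcard, hD1, hD2⟩ := hQ
  have hBne : (T.erase x).Nonempty := by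
    rw [Finset.erase_nonempty hxT]
    exact (Finset.nontrivial_iff_ne_singleton hxT).2 hTne
  have hxblocks : ∀ t ∈ 𝒜.erase T, x ∉ t := by
    intro t ht hxt
    obtain ⟨u, _, hu⟩ := hex x hx
    exact (mem_erase.1 ht).1
      ((hu t ⟨mem_of_mem_erase ht, hxt⟩).trans (hu T ⟨hT, hxT⟩).symm)
  have hBnot : T.erase x ∉ 𝒜.erase T := by
    intro h
    obtain ⟨y, hy⟩ := hBne
    obtain ⟨u, _, hu⟩ := hex y (hsub T hT (mem_of_mem_erase hy))
    exact (mem_erase.1 h).1 (((hu _ ⟨mem_of_mem_erase h, hy⟩)).trans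
      (hu T ⟨hT, mem_of_mem_erase hy⟩).symm)
  have hdbnew : ∀ (C : Finset (Fin M)), DistinctBlocks 𝒜 ↑C →
      DistinctBlocks (insert (T.erase x) (𝒜.erase T)) ↑C := by
    intro C hD
    refine db_insert (db_subset (erase_subset _ _) hD) ?_
    intro a ha b hb hab ⟨haB, hbB⟩
    exact hD a ha b hb hab T hT ⟨mem_of_mem_erase haB, mem_of_mem_erase hbB⟩
  refine ⟨?_, ?_, ?_, ?_, hdbnew C₁ hD1, hdbnew C₂ hD2⟩
  · intro t ht
    rcases mem_insert.1 ht with rfl | ht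
    · exact hBne
    · exact hne t (mem_of_mem_erase ht)
  · intro t ht
    rcases mem_insert.1 ht with rfl | ht
    · intro y hy
      exact mem_erase.2 ⟨(mem_erase.1 hy).1, hsub T hT (mem_of_mem_erase hy)⟩
    · intro y hy
      exact mem_erase.2 ⟨fun h => hxblocks t ht (h ▸ hy), hsub t (mem_of_mem_erase ht) hy⟩
  · intro y hy
    obtain ⟨hyx, hys⟩ := mem_erase.1 hy
    obtain ⟨t, ⟨ht, hyt⟩, hu⟩ := hex y hys
    by_cases htT : t = T
    · subst htT
      refine ⟨t.erase x, ⟨mem_insert_self _ _, mem_erase.2 ⟨hyx, hyt⟩⟩, ?_⟩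
      rintro t' ⟨ht', hyt'⟩
      rcases mem_insert.1 ht' with rfl | ht'
      · rfl
      · exact absurd (hu t' ⟨mem_of_mem_erase ht', hyt'⟩) (mem_erase.1 ht').1
    · refine ⟨t, ⟨mem_insert_of_mem (mem_erase.2 ⟨htT, ht⟩), hyt⟩, ?_⟩
      rintro t' ⟨ht', hyt'⟩
      rcases mem_insert.1 ht' with rfl | ht'
      · exact absurd ((hu T ⟨hT, mem_of_mem_erase hyt'⟩).symm) htT
      · exact hu t' ⟨mem_of_mem_erase ht', hyt'⟩
  · rw [card_insert_of_notMem hBnot, card_erase_of_mem hT, hcard]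
    omega

/-- H4b: the shrunken block avoids `x`'s classmates. -/
lemma H4b {C₁ C₂ s : Finset (Fin M)} {x : Fin M} {m : ℕ} {𝒜 : Finset (Finset (Fin M))}
    {T : Finset (Fin M)}
    (hQ : Q C₁ C₂ s m 𝒜) (hT : T ∈ 𝒜) (hxT : x ∈ T) :
    ∀ y ∈ T.erase x, y ∉ Kx C₁ C₂ x := by
  intro y hy hyK
  obtain ⟨hyx, hcase⟩ := of_mem_Kx hyK
  rcases hcase with ⟨hx1, hy1⟩ | ⟨hx2, hy2⟩
  · exact hQ.2.2.2.2.1 x hx1 y hy1 (fun h => hyx h.symm) T hT ⟨hxT, mem_of_mem_erase hy⟩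
  · exact hQ.2.2.2.2.2 x hx2 y hy2 (fun h => hyx h.symm) T hT ⟨hxT, mem_of_mem_erase hy⟩

end RRAux

namespace RRAux
section Rec
variable {M : ℕ}

lemma card_inter_le {C₁ C₂ s : Finset (Fin M)} {m : ℕ} {𝒜 : Finset (Finset (Fin M))}
    (hQ : Q C₁ C₂ s m 𝒜) {C : Finset (Fin M)} (hC : DistinctBlocks 𝒜 ↑C) :
    (C ∩ s).card ≤ m := by
  classical
  by_contra hlt
  push_neg at hlt
  rw [← hQ.2.2.2.1] at hlt
  have hmap : ∀ y : Fin M, ∃ t, y ∈ C ∩ s → t ∈ 𝒜 ∧ y ∈ t := by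
    intro y
    by_cases hy : y ∈ C ∩ s
    · obtain ⟨t, ht, _⟩ := hQ.2.2.1 y (mem_inter.1 hy).2
      exact ⟨t, fun _ => ht⟩
    · exact ⟨∅, fun h => absurd h hy⟩
  choose f hf using hmap
  obtain ⟨a, ha, b, hb, hab, hfab⟩ :=
    Finset.exists_ne_map_eq_of_card_lt_of_maps_to hlt (fun y hy => (hf y hy).1)
  exact hC a (mem_inter.1 ha).1 b (mem_inter.1 hb).1 hab (f a) ((hf a ha).1)
    ⟨(hf a ha).2, hfab ▸ (hf b hb).2⟩

lemma card_blocks_meeting {C₁ C₂ s : Finset (Fin M)} {m : ℕ} {𝒜 : Finset (Finset (Fin M))}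
    (hQ : Q C₁ C₂ s m 𝒜) {K : Finset (Fin M)} (hK : DistinctBlocks 𝒜 ↑K) :
    (𝒜.filter (fun B => ∃ y ∈ B, y ∈ K)).card = (K ∩ s).card := by
  classical
  have hmap : ∀ y ∈ K ∩ s, ∃ t ∈ 𝒜, y ∈ t := by
    intro y hy
    obtain ⟨t, ht, _⟩ := hQ.2.2.1 y (mem_inter.1 hy).2
    exact ⟨t, ht.1, ht.2⟩
  choose f hf1 hf2 using hmap
  symm
  apply Finset.card_bij (fun y hy => f y hy)
  · intro y hy
    exact mem_filter.2 ⟨hf1 y hy, y, hf2 y hy, (mem_inter.1 hy).1⟩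
  · intro a ha b hb hfeq
    by_contra hab
    exact hK a (mem_inter.1 ha).1 b (mem_inter.1 hb).1 hab (f a ha) (hf1 a ha)
      ⟨hf2 a ha, hfeq ▸ hf2 b hb⟩
  · intro B hB
    obtain ⟨hB𝒜, y, hyB, hyK⟩ := mem_filter.1 hB
    have hys : y ∈ s := hQ.2.1 B hB𝒜 hyB
    have hy : y ∈ K ∩ s := mem_inter.2 ⟨hyK, hys⟩
    exact ⟨y, hy, block_unique hQ hys (hf1 y hy) hB𝒜 (hf2 y hy) hyB⟩

lemma singleton_notMem_join {C₁ C₂ s : Finset (Fin M)} {x : Fin M} {m : ℕ}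
    {ℬ : Finset (Finset (Fin M))} {B : Finset (Fin M)}
    (h : Q C₁ C₂ (s.erase x) m ℬ) (hB : B ∈ ℬ) :
    ({x} : Finset (Fin M)) ∉ insert (insert x B) (ℬ.erase B) := by
  intro hmem
  rcases mem_insert.1 hmem with h1 | h1
  · obtain ⟨y, hy⟩ := h.1 B hB
    have hyx : y = x := by
      have : y ∈ ({x} : Finset (Fin M)) := by rw [h1]; exact mem_insert_of_mem hy
      exact mem_singleton.1 this
    exact x_notMem h hB (hyx ▸ hy)
  · exact x_notMem h (mem_of_mem_erase h1) (mem_singleton_self x)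

variable (C₁ C₂ s : Finset (Fin M)) (x : Fin M)

/-- the reconstruction map of the recurrence -/
def psi (hx : x ∈ s) (hdisj : Disjoint C₁ C₂) (m : ℕ) :
    ({ℬ : Finset (Finset (Fin M)) // Q C₁ C₂ (s.erase x) m ℬ} ⊕
      (Σ ℬ : {ℬ : Finset (Finset (Fin M)) // Q C₁ C₂ (s.erase x) (m + 1) ℬ},
        {B : Finset (Fin M) // B ∈ ℬ.1 ∧ ∀ y ∈ B, y ∉ Kx C₁ C₂ x})) →
    {𝒜 : Finset (Finset (Fin M)) // Q C₁ C₂ s (m + 1) 𝒜}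
  | .inl ⟨ℬ, h⟩ => ⟨insert {x} ℬ, H1 hx h⟩
  | .inr ⟨⟨ℬ, h⟩, ⟨B, hB, hKB⟩⟩ => ⟨insert (insert x B) (ℬ.erase B), H2 hx hdisj h hB hKB⟩

lemma psi_bij (hx : x ∈ s) (hdisj : Disjoint C₁ C₂) (m : ℕ) :
    Function.Bijective (psi C₁ C₂ s x hx hdisj m) := by
  constructor
  · rintro (⟨ℬ, h⟩ | ⟨⟨ℬ, h⟩, B, hB, hKB⟩) (⟨ℬ', h'⟩ | ⟨⟨ℬ', h'⟩, B', hB', hKB'⟩) heq <;>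
      simp only [psi, Subtype.mk.injEq] at heq
    · have hn : ({x} : Finset (Fin M)) ∉ ℬ :=
        fun hh => x_notMem h hh (mem_singleton_self x)
      have hn' : ({x} : Finset (Fin M)) ∉ ℬ' :=
        fun hh => x_notMem h' hh (mem_singleton_self x)
      have : ℬ = ℬ' := by rw [← Finset.erase_insert hn, heq, Finset.erase_insert hn']
      subst this
      rfl
    · exact absurd (heq ▸ mem_insert_self _ _) (singleton_notMem_join h' hB')
    · exact absurd (heq ▸ mem_insert_self _ _) (singleton_notMem_join h hB)
    · -- both are joins
      have hQA := H2 hx hdisj h hB hKB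
      have hT' : insert x B' ∈ insert (insert x B) (ℬ.erase B) := by
        rw [heq]; exact mem_insert_self _ _
      have hTT' : insert x B = insert x B' :=
        block_unique hQA hx (mem_insert_self _ _) hT' (mem_insert_self _ _) (mem_insert_self _ _)
      have hxB : x ∉ B := fun hh => x_notMem h hB hh
      have hxB' : x ∉ B' := fun hh => x_notMem h' hB' hh
      have hBB' : B = B' := by
        rw [← Finset.erase_insert hxB, hTT', Finset.erase_insert hxB']
      subst hBB'
      have hTnot : insert x B ∉ ℬ.erase B :=
        fun hh => x_notMem h (mem_of_mem_erase hh) (mem_insert_self x B)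
      have hTnot' : insert x B ∉ ℬ'.erase B :=
        fun hh => x_notMem h' (mem_of_mem_erase hh) (mem_insert_self x B)
      have hEE : ℬ.erase B = ℬ'.erase B := by
        rw [← Finset.erase_insert hTnot, heq, Finset.erase_insert hTnot']
      have hBm : B ∈ ℬ := hB
      have hBm' : B ∈ ℬ' := hB'
      have : ℬ = ℬ' := by
        rw [← Finset.insert_erase hBm, hEE, Finset.insert_erase hBm']
      subst this
      rfl
  · rintro ⟨𝒜, hQA⟩
    obtain ⟨T, ⟨hT, hxT⟩, hu⟩ := hQA.2.2.1 x hx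
    by_cases hTx : T = {x}
    · have hmem : ({x} : Finset (Fin M)) ∈ 𝒜 := hTx ▸ hT
      refine ⟨.inl ⟨𝒜.erase {x}, H3 hx hQA hmem⟩, ?_⟩
      simp only [psi]
      exact Subtype.ext (insert_erase hmem)
    · refine ⟨.inr ⟨⟨insert (T.erase x) (𝒜.erase T), H4 hx hQA hT hxT hTx⟩,
        ⟨T.erase x, mem_insert_self _ _, H4b hQA hT hxT⟩⟩, ?_⟩
      simp only [psi]
      apply Subtype.ext
      show insert (insert x (T.erase x)) ((insert (T.erase x) (𝒜.erase T)).erase (T.erase x)) = 𝒜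
      rw [Finset.insert_erase hxT, Finset.erase_insert (Bnot hQA hT hxT hTx),
        Finset.insert_erase hT]

theorem cnt_rec (hx : x ∈ s) (hdisj : Disjoint C₁ C₂) (m : ℕ) :
    cnt C₁ C₂ s (m + 1)
      = cnt C₁ C₂ (s.erase x) m
        + cnt C₁ C₂ (s.erase x) (m + 1) * (m + 1 - (Kx C₁ C₂ x ∩ s.erase x).card) := by
  classical
  set s' := s.erase x with hs'
  set d := (Kx C₁ C₂ x ∩ s').card with hd
  have hbij := psi_bij C₁ C₂ s x hx hdisj m
  have hcards := Nat.card_eq_of_bijective _ hbij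
  rw [Nat.card_sum] at hcards
  have hB2 : Nat.card (Σ ℬ : {ℬ : Finset (Finset (Fin M)) // Q C₁ C₂ s' (m + 1) ℬ},
      {B : Finset (Fin M) // B ∈ ℬ.1 ∧ ∀ y ∈ B, y ∉ Kx C₁ C₂ x})
      = cnt C₁ C₂ s' (m + 1) * (m + 1 - d) := by
    rw [Nat.card_eq_fintype_card, Fintype.card_sigma]
    have hfib : ∀ ℬ : {ℬ : Finset (Finset (Fin M)) // Q C₁ C₂ s' (m + 1) ℬ},
        Fintype.card {B : Finset (Fin M) // B ∈ ℬ.1 ∧ ∀ y ∈ B, y ∉ Kx C₁ C₂ x}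
          = m + 1 - d := by
      rintro ⟨ℬ, hQB⟩
      rw [Fintype.card_subtype]
      have hfe : (univ.filter (fun B : Finset (Fin M) => B ∈ ℬ ∧ ∀ y ∈ B, y ∉ Kx C₁ C₂ x))
          = ℬ.filter (fun B => ∀ y ∈ B, y ∉ Kx C₁ C₂ x) := by
        ext B; simp
      rw [hfe]
      have hsplit := Finset.card_filter_add_card_filter_not
        (s := ℬ) (p := fun B => ∀ y ∈ B, y ∉ Kx C₁ C₂ x)
      have hneg : ℬ.filter (fun B => ¬ ∀ y ∈ B, y ∉ Kx C₁ C₂ x)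
          = ℬ.filter (fun B => ∃ y ∈ B, y ∈ Kx C₁ C₂ x) := by
        apply Finset.filter_congr
        intro B _
        simp [not_forall]
      rw [hneg] at hsplit
      rw [card_blocks_meeting hQB (db_Kx x hQB.2.2.2.2.1 hQB.2.2.2.2.2)] at hsplit
      rw [hQB.2.2.2.1] at hsplit
      omega
    calc (∑ ℬ : {ℬ : Finset (Finset (Fin M)) // Q C₁ C₂ s' (m + 1) ℬ},
        Fintype.card {B : Finset (Fin M) // B ∈ ℬ.1 ∧ ∀ y ∈ B, y ∉ Kx C₁ C₂ x})
        = ∑ _ℬ : {ℬ : Finset (Finset (Fin M)) // Q C₁ C₂ s' (m + 1) ℬ}, (m + 1 - d) := by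
          exact Finset.sum_congr rfl (fun ℬ _ => hfib ℬ)
      _ = cnt C₁ C₂ s' (m + 1) * (m + 1 - d) := by
          rw [Finset.sum_const, smul_eq_mul, cnt, Nat.card_eq_fintype_card, Fintype.card]
  rw [cnt, ← hcards, hB2]
  rfl

end Rec
end RRAux
namespace RRAux
section Basic
variable {M : ℕ} {C₁ C₂ s : Finset (Fin M)} {m : ℕ}

lemma cnt_zero_of_nonempty (C₁ C₂ : Finset (Fin M)) (hs : s.Nonempty) :
    cnt C₁ C₂ s 0 = 0 := by
  rw [cnt, Nat.card_eq_zero]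
  left
  constructor
  rintro ⟨𝒜, hQ⟩
  have h𝒜 : 𝒜 = ∅ := card_eq_zero.1 hQ.2.2.2.1
  obtain ⟨y, hy⟩ := hs
  obtain ⟨t, ⟨ht, _⟩, _⟩ := hQ.2.2.1 y hy
  rw [h𝒜] at ht
  exact absurd ht (notMem_empty t)

lemma cnt_empty (C₁ C₂ : Finset (Fin M)) (m : ℕ) :
    cnt C₁ C₂ (∅ : Finset (Fin M)) m = if m = 0 then 1 else 0 := by
  have hQe : ∀ 𝒜 : Finset (Finset (Fin M)), Q C₁ C₂ ∅ m 𝒜 ↔ (𝒜 = ∅ ∧ m = 0) := by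
    intro 𝒜
    constructor
    · intro hQ
      have h𝒜 : 𝒜 = ∅ := by
        rw [eq_empty_iff_forall_notMem]
        intro t ht
        obtain ⟨y, hy⟩ := hQ.1 t ht
        exact absurd (hQ.2.1 t ht hy) (notMem_empty y)
      refine ⟨h𝒜, ?_⟩
      rw [← hQ.2.2.2.1, h𝒜, card_empty]
    · rintro ⟨rfl, rfl⟩
      exact ⟨fun t ht => absurd ht (notMem_empty t), fun t ht => absurd ht (notMem_empty t),
        fun y hy => absurd hy (notMem_empty y), card_empty,
        fun a _ b _ _ t ht => absurd ht (notMem_empty t),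
        fun a _ b _ _ t ht => absurd ht (notMem_empty t)⟩
  rw [cnt]
  split_ifs with hm
  · subst hm
    rw [Nat.card_eq_one_iff_unique]
    constructor
    · constructor
      rintro ⟨𝒜, h⟩ ⟨𝒜', h'⟩
      have := ((hQe 𝒜).1 h).1
      have := ((hQe 𝒜').1 h').1
      apply Subtype.ext
      simp_all
    · exact ⟨⟨∅, (hQe ∅).2 ⟨rfl, rfl⟩⟩⟩
  · rw [Nat.card_eq_zero]
    left
    constructor
    rintro ⟨𝒜, h⟩
    exact hm ((hQe 𝒜).1 h).2

lemma le_card_of_Q {𝒜 : Finset (Finset (Fin M))} (hQ : Q C₁ C₂ s m 𝒜) : m ≤ s.card := by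
  classical
  have hpd : (↑𝒜 : Set (Finset (Fin M))).PairwiseDisjoint id := by
    intro t ht t' ht' htt'
    rw [Function.onFun, disjoint_left]
    intro y hyt hyt'
    exact htt' (block_unique hQ (hQ.2.1 t ht hyt) ht ht' hyt hyt')
  have h1 : 𝒜.card ≤ (𝒜.biUnion id).card := card_le_card_biUnion hpd (fun t ht => hQ.1 t ht)
  have h2 : 𝒜.biUnion id ⊆ s := by
    intro y hy
    obtain ⟨t, ht, hyt⟩ := mem_biUnion.1 hy
    exact hQ.2.1 t ht hyt
  rw [hQ.2.2.2.1] at h1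
  exact h1.trans (card_le_card h2)

lemma cnt_card_pos (C₁ C₂ : Finset (Fin M)) (s : Finset (Fin M)) :
    0 < cnt C₁ C₂ s s.card := by
  classical
  have hQ : Q C₁ C₂ s s.card (s.image (fun y => ({y} : Finset (Fin M)))) := by
    refine ⟨?_, ?_, ?_, ?_, ?_, ?_⟩
    · intro t ht
      obtain ⟨y, _, rfl⟩ := mem_image.1 ht
      exact ⟨y, mem_singleton_self y⟩
    · intro t ht
      obtain ⟨y, hy, rfl⟩ := mem_image.1 ht
      simpa using hy
    · intro y hy
      refine ⟨{y}, ⟨mem_image_of_mem _ hy, mem_singleton_self y⟩, ?_⟩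
      rintro t ⟨ht, hyt⟩
      obtain ⟨z, _, rfl⟩ := mem_image.1 ht
      rw [mem_singleton.1 hyt]
    · exact card_image_of_injective s (fun a b h => singleton_inj.1 h)
    · intro a _ b _ hab t ht ⟨hat, hbt⟩
      obtain ⟨z, _, rfl⟩ := mem_image.1 ht
      exact hab ((mem_singleton.1 hat).trans (mem_singleton.1 hbt).symm)
    · intro a _ b _ hab t ht ⟨hat, hbt⟩
      obtain ⟨z, _, rfl⟩ := mem_image.1 ht
      exact hab ((mem_singleton.1 hat).trans (mem_singleton.1 hbt).symm)
  rw [cnt]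
  have : Nonempty {𝒜 : Finset (Finset (Fin M)) // Q C₁ C₂ s s.card 𝒜} := ⟨⟨_, hQ⟩⟩
  exact Nat.card_pos

lemma cnt_pos_le_card (h : 0 < cnt C₁ C₂ s m) : m ≤ s.card := by
  rw [cnt, Nat.card_pos_iff] at h
  obtain ⟨⟨𝒜, hQ⟩⟩ := h.1
  exact le_card_of_Q hQ

lemma cnt_pos_d_le {x : Fin M} (h : 0 < cnt C₁ C₂ s m) :
    (Kx C₁ C₂ x ∩ s).card ≤ m := by
  rw [cnt, Nat.card_pos_iff] at h
  obtain ⟨⟨𝒜, hQ⟩⟩ := h.1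
  exact card_inter_le hQ (db_Kx x hQ.2.2.2.2.1 hQ.2.2.2.2.2)

end Basic
end RRAux
namespace RRAux
section Step

/-- one step of the recurrence preserves interval support and log-concavity -/
lemma step_lemma (a b : ℕ → ℕ) (d L U : ℕ)
    (hLU : L ≤ U) (hdL : d ≤ L)
    (hsupp : ∀ m, 0 < a m ↔ (L ≤ m ∧ m ≤ U))
    (hlc : ∀ m, a (m + 2) * a m ≤ a (m + 1) ^ 2)
    (hb0 : b 0 = 0)
    (hb : ∀ m, b (m + 1) = a m + a (m + 1) * (m + 1 - d)) :
    (∀ m, 0 < b m ↔ ((if d < L then L else L + 1) ≤ m ∧ m ≤ U + 1)) ∧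
    (∀ m, b (m + 2) * b m ≤ b (m + 1) ^ 2) := by
  constructor
  · intro m
    match m with
    | 0 =>
      simp only [hb0]
      constructor
      · omega
      · rintro ⟨h1, _⟩
        split_ifs at h1 <;> omega
    | m + 1 =>
      rw [hb m]
      constructor
      · intro hpos
        by_cases ham : 0 < a m
        · obtain ⟨h1, h2⟩ := (hsupp m).1 ham
          refine ⟨?_, by omega⟩
          split_ifs <;> omega
        · have ham0 : a m = 0 := by omega
          have hprod : 0 < a (m + 1) * (m + 1 - d) := by omega
          have h1 : 0 < a (m + 1) := by
            rcases Nat.eq_zero_or_pos (a (m + 1)) with h | h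
            · rw [h] at hprod; simp at hprod
            · exact h
          have h2 : 0 < m + 1 - d := by
            rcases Nat.eq_zero_or_pos (m + 1 - d) with h | h
            · rw [h] at hprod; simp at hprod
            · exact h
          obtain ⟨hL1, hU1⟩ := (hsupp (m + 1)).1 h1
          refine ⟨?_, by omega⟩
          split_ifs <;> omega
      · rintro ⟨h1, h2⟩
        by_cases hm : L ≤ m ∧ m ≤ U
        · have := (hsupp m).2 hm
          omega
        · have hmU : m ≤ U := by omega
          have hmL : m < L := by
            rcases Nat.lt_or_ge m L with h | h
            · exact h
            · exact absurd ⟨h, hmU⟩ hm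
          split_ifs at h1 with hdL'
          · have hp : 0 < a (m + 1) := (hsupp (m + 1)).2 ⟨by omega, by omega⟩
            have hpos2 : 0 < m + 1 - d := by omega
            have := Nat.mul_pos hp hpos2
            omega
          · omega
  · intro m
    match m with
    | 0 => rw [hb0]; simp
    | m + 1 =>
      rw [hb (m + 2), hb m, hb (m + 1)]
      set p := a m with hp
      set q := a (m + 1) with hq
      set r := a (m + 2) with hr
      set t := a (m + 3) with ht
      by_cases hrpos : 0 < r
      · by_cases hqpos : 0 < q
        · have hLq : L ≤ m + 1 := ((hsupp (m + 1)).1 hqpos).1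
          have hd1 : d ≤ m + 1 := hdL.trans hLq
          have e1 : m + 2 - d = (m + 1 - d) + 1 := by omega
          have e2 : m + 3 - d = (m + 1 - d) + 2 := by omega
          rw [e1, e2]
          set c := m + 1 - d with hc
          have F1 : t * q ≤ r ^ 2 := hlc (m + 1)
          have F2 : r * p ≤ q ^ 2 := hlc m
          have F3 : t * p ≤ r * q := by
            have key : (t * p) * (q * r) ≤ (r * q) * (q * r) := by
              calc (t * p) * (q * r) = (t * q) * (r * p) := by ring
                _ ≤ r ^ 2 * q ^ 2 := Nat.mul_le_mul F1 F2
                _ = (r * q) * (q * r) := by ring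
            exact Nat.le_of_mul_le_mul_right key (Nat.mul_pos hqpos hrpos)
          have G2 : t * p * (c + 2) ≤ r * q * (c + 2) := Nat.mul_le_mul_right _ F3
          have G3 : t * q * (c * (c + 2)) ≤ r ^ 2 * (c * (c + 2)) := Nat.mul_le_mul_right _ F1
          have G4 : r ^ 2 * (c * (c + 2)) ≤ r ^ 2 * ((c + 1) * (c + 1)) := by
            apply Nat.mul_le_mul_left
            have : c * (c + 2) + 1 = (c + 1) * (c + 1) := by ring
            omega
          calc (r + t * (c + 2)) * (p + q * c)
              = r * p + (r * q * c + (t * p * (c + 2) + t * q * (c * (c + 2)))) := by ring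
            _ ≤ q ^ 2 + (r * q * c + (r * q * (c + 2) + r ^ 2 * ((c + 1) * (c + 1)))) :=
                add_le_add F2 (add_le_add le_rfl (add_le_add G2 (G3.trans G4)))
            _ = (q + r * (c + 1)) ^ 2 := by ring
        · have hq0 : q = 0 := by omega
          have hrle : m + 2 ≤ U := ((hsupp (m + 2)).1 hrpos).2
          have hm1L : m + 1 < L := by
            by_contra hcon
            push_neg at hcon
            have := (hsupp (m + 1)).2 ⟨hcon, by omega⟩
            omega
          have hp0 : p = 0 := by
            by_contra hcon
            have := ((hsupp m).1 (Nat.pos_of_ne_zero hcon)).1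
            omega
          rw [hp0, hq0]
          simp
      · have hr0 : r = 0 := by omega
        by_cases hcase : U < m + 2
        · have ht0 : t = 0 := by
            by_contra hcon
            have := ((hsupp (m + 3)).1 (Nat.pos_of_ne_zero hcon)).2
            omega
          rw [hr0, ht0]
          simp
        · have hL2 : m + 2 < L := by
            by_contra hcon
            push_neg at hcon
            have := (hsupp (m + 2)).2 ⟨hcon, by omega⟩
            omega
          have hp0 : p = 0 := by
            by_contra hcon
            have := ((hsupp m).1 (Nat.pos_of_ne_zero hcon)).1
            omega
          have hq0 : q = 0 := by
            by_contra hcon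
            have := ((hsupp (m + 1)).1 (Nat.pos_of_ne_zero hcon)).1
            omega
          rw [hp0, hq0]
          simp

end Step
end RRAux
namespace RRAux

lemma invariant {M : ℕ} (C₁ C₂ : Finset (Fin M)) (hdisj : Disjoint C₁ C₂)
    (s : Finset (Fin M)) :
    ∃ L, L ≤ s.card ∧ (∀ m, 0 < cnt C₁ C₂ s m ↔ (L ≤ m ∧ m ≤ s.card)) ∧
      (∀ m, cnt C₁ C₂ s (m + 2) * cnt C₁ C₂ s m ≤ cnt C₁ C₂ s (m + 1) ^ 2) := by
  classical
  induction s using Finset.induction_on with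
  | empty =>
    refine ⟨0, le_rfl, ?_, ?_⟩
    · intro m
      rw [cnt_empty, card_empty]
      split_ifs with h <;> simp <;> omega
    · intro m
      rw [cnt_empty, cnt_empty]
      simp
  | @insert a s ha ih =>
    obtain ⟨L, hLc, hsupp, hlc⟩ := ih
    set d := (Kx C₁ C₂ a ∩ s).card with hd
    have hdL : d ≤ L := cnt_pos_d_le (x := a) ((hsupp L).2 ⟨le_rfl, hLc⟩)
    have hb : ∀ m, cnt C₁ C₂ (insert a s) (m + 1)
        = cnt C₁ C₂ s m + cnt C₁ C₂ s (m + 1) * (m + 1 - d) := by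
      intro m
      have := cnt_rec C₁ C₂ (insert a s) a (mem_insert_self a s) hdisj m
      rwa [Finset.erase_insert ha] at this
    have hb0 : cnt C₁ C₂ (insert a s) 0 = 0 :=
      cnt_zero_of_nonempty _ _ (insert_nonempty a s)
    obtain ⟨hs2, hl2⟩ := step_lemma (cnt C₁ C₂ s) (cnt C₁ C₂ (insert a s)) d L s.card
      hLc hdL hsupp hlc hb0 hb
    refine ⟨if d < L then L else L + 1, ?_, ?_, hl2⟩
    · rw [card_insert_of_notMem ha]
      split_ifs <;> omega
    · intro m
      rw [card_insert_of_notMem ha]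
      exact hs2 m

/-- log-concavity plus interval support gives unimodality -/
lemma unimodal_of (g : ℕ → ℕ) (N : ℕ)
    (hlc : ∀ m, g (m + 2) * g m ≤ g (m + 1) ^ 2)
    (hint : ∀ i j k, i ≤ j → j ≤ k → 0 < g i → 0 < g k → 0 < g j) :
    ∃ K ≤ N, (∀ i j, i ≤ j → j ≤ K → g i ≤ g j) ∧
      (∀ i j, K ≤ i → i ≤ j → j ≤ N → g j ≤ g i) := by
  obtain ⟨K, hKmem, hKmax⟩ := Finset.exists_max_image (range (N + 1)) g ⟨0, mem_range.2 (by omega)⟩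
  have hKN : K ≤ N := by have := mem_range.1 hKmem; omega
  have hmax : ∀ b, b ≤ N → g b ≤ g K := fun b hb => hKmax b (mem_range.2 (by omega))
  -- going up below K
  have up : ∀ j k, k + 1 + j = K → g k ≤ g (k + 1) := by
    intro j
    induction j with
    | zero =>
      intro k hk
      have : k + 1 = K := by omega
      rw [this]
      exact hmax k (by omega)
    | succ j ih =>
      intro k hk
      have h2 : g (k + 1) ≤ g (k + 2) := ih (k + 1) (by omega)
      rcases Nat.eq_zero_or_pos (g (k + 2)) with h0 | hpos
      · have h1 : g (k + 1) = 0 := by omega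
        by_contra hgt
        push_neg at hgt
        have hgk : 0 < g k := by omega
        have hgK : 0 < g K := by
          rcases Nat.eq_zero_or_pos (g K) with hK0 | h
          · have := hmax k (by omega)
            omega
          · exact h
        have := hint k (k + 2) K (by omega) (by omega) hgk hgK
        omega
      · have hl := hlc k
        have h3 : g (k + 1) ^ 2 ≤ g (k + 2) * g (k + 1) := by
          rw [pow_two]
          exact Nat.mul_le_mul_right _ h2
        have h4 : g (k + 2) * g k ≤ g (k + 2) * g (k + 1) := hl.trans h3
        exact Nat.le_of_mul_le_mul_left h4 hpos
  -- going down above K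
  have down : ∀ j, K ≤ j → j + 1 ≤ N → g (j + 1) ≤ g j := by
    intro j hKj
    induction j, hKj using Nat.le_induction with
    | base =>
      intro hjN
      exact hmax (K + 1) hjN
    | succ j hKj ih =>
      intro hjN
      show g (j + 2) ≤ g (j + 1)
      have h2 : g (j + 1) ≤ g j := ih (by omega)
      rcases Nat.eq_zero_or_pos (g j) with h0 | hpos
      · have h1 : g (j + 1) = 0 := by omega
        rcases Nat.eq_zero_or_pos (g (j + 2)) with hz | hz
        · omega
        · have hgK : 0 < g K := by
            rcases Nat.eq_zero_or_pos (g K) with hK0 | h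
            · have := hmax (j + 2) (by omega)
              omega
            · exact h
          have := hint K j (j + 2) hKj (by omega) hgK hz
          omega
      · have hl := hlc j
        have h3 : g (j + 1) ^ 2 ≤ g j * g (j + 1) := by
          rw [pow_two]
          exact Nat.mul_le_mul_right _ h2
        have h4 : g (j + 2) * g j ≤ g (j + 1) * g j := by
          calc g (j + 2) * g j ≤ g (j + 1) ^ 2 := hl
            _ ≤ g j * g (j + 1) := h3
            _ = g (j + 1) * g j := by ring
        exact Nat.le_of_mul_le_mul_right h4 hpos
  refine ⟨K, hKN, ?_, ?_⟩
  · intro i j hij hjK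
    induction j with
    | zero =>
      have : i = 0 := by omega
      rw [this]
    | succ j ihj =>
      rcases Nat.lt_or_ge i (j + 1) with h | h
      · exact (ihj (by omega) (by omega)).trans (up (K - (j + 1)) j (by omega))
      · have : i = j + 1 := by omega
        rw [this]
  · intro i j hKi hij hjN
    induction j with
    | zero =>
      have : i = 0 := by omega
      rw [this]
    | succ j ihj =>
      rcases Nat.lt_or_ge i (j + 1) with h | h
      · exact (down j (by omega) (by omega)).trans (ihj (by omega) (by omega))
      · have : i = j + 1 := by omega
        rw [this]

end RRAux

namespace RRAux

lemma rr_eq_cnt (r₁ r₂ n k : ℕ) :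
    rrStirling r₁ r₂ n k
      = cnt (univ.filter (fun x : Fin (n + r₁ + r₂) => (x : ℕ) < r₁))
          (univ.filter (fun x : Fin (n + r₁ + r₂) => r₁ ≤ (x : ℕ) ∧ (x : ℕ) < r₁ + r₂))
          univ (k + r₂) := by
  classical
  rw [rrStirling, cnt]
  apply Nat.card_congr
  apply Equiv.subtypeEquivRight
  intro 𝒜
  have hs1 : (↑(univ.filter (fun x : Fin (n + r₁ + r₂) => (x : ℕ) < r₁)) :
      Set (Fin (n + r₁ + r₂))) = {x : Fin (n + r₁ + r₂) | (x : ℕ) < r₁} := by ext y; simp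
  have hs2 : (↑(univ.filter (fun x : Fin (n + r₁ + r₂) =>
      r₁ ≤ (x : ℕ) ∧ (x : ℕ) < r₁ + r₂)) : Set (Fin (n + r₁ + r₂)))
      = {x : Fin (n + r₁ + r₂) | r₁ ≤ (x : ℕ) ∧ (x : ℕ) < r₁ + r₂} := by ext y; simp
  simp only [Q, IsSetPartition, hs1, hs2]
  constructor
  · rintro ⟨⟨h1, h2⟩, h3, h4, h5⟩
    exact ⟨h1, fun t _ => subset_univ t, fun x _ => h2 x, h3, h4, h5⟩
  · rintro ⟨h1, _, h3, h4, h5, h6⟩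
    exact ⟨⟨h1, fun x => h3 x (mem_univ x)⟩, h4, h5, h6⟩

end RRAux


open RRAux in
/-- the sequence $k \mapsto {n+r_1+r_2 \brace k+r_2}_{r_1,r_2}$, $0 \le k \le n+r_1$,
is log-concave, and in particular unimodal. -/
theorem rrStirling_log_concave (n r₁ r₂ : ℕ) (h : r₁ ≤ r₂) :
    (∀ k, 1 ≤ k → k ≤ n + r₁ - 1 →
      rrStirling r₁ r₂ n (k + 1) * rrStirling r₁ r₂ n (k - 1) ≤ (rrStirling r₁ r₂ n k) ^ 2) ∧
    (∃ K ≤ n + r₁,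
      (∀ i j, i ≤ j → j ≤ K → rrStirling r₁ r₂ n i ≤ rrStirling r₁ r₂ n j) ∧
      (∀ i j, K ≤ i → i ≤ j → j ≤ n + r₁ → rrStirling r₁ r₂ n j ≤ rrStirling r₁ r₂ n i)) := by
  classical
  set C1 : Finset (Fin (n + r₁ + r₂)) := univ.filter (fun x => (x : ℕ) < r₁) with hC1
  set C2 : Finset (Fin (n + r₁ + r₂)) :=
    univ.filter (fun x => r₁ ≤ (x : ℕ) ∧ (x : ℕ) < r₁ + r₂) with hC2
  have hdisj : Disjoint C1 C2 := by
    rw [Finset.disjoint_left]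
    intro x h1 h2
    rw [hC1, mem_filter] at h1
    rw [hC2, mem_filter] at h2
    omega
  have hbridge : ∀ k, rrStirling r₁ r₂ n k = cnt C1 C2 univ (k + r₂) :=
    fun k => rr_eq_cnt r₁ r₂ n k
  obtain ⟨L, hL, hsupp, hlc⟩ := invariant C1 C2 hdisj univ
  have hcardu : (univ : Finset (Fin (n + r₁ + r₂))).card = n + r₁ + r₂ := by simp
  rw [hcardu] at hsupp hL
  constructor
  · intro k hk1 _
    rw [hbridge, hbridge, hbridge]
    have e1 : k + 1 + r₂ = (k - 1 + r₂) + 2 := by omega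
    have e3 : k + r₂ = (k - 1 + r₂) + 1 := by omega
    rw [e1, e3]
    exact hlc (k - 1 + r₂)
  · refine unimodal_of (fun k => rrStirling r₁ r₂ n k) (n + r₁) ?_ ?_
    · intro m
      rw [hbridge, hbridge, hbridge]
      have e1 : m + 2 + r₂ = m + r₂ + 2 := by omega
      have e2 : m + 1 + r₂ = m + r₂ + 1 := by omega
      rw [e1, e2]
      exact hlc (m + r₂)
    · intro i j k hij hjk hi hk
      rw [hbridge] at hi hk ⊢
      have hi' := (hsupp (i + r₂)).1 hi
      have hk' := (hsupp (k + r₂)).1 hk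
      exact (hsupp (j + r₂)).2 ⟨by omega, by omega⟩
end

section
/- Newton's inequality: if a_0, a_1, ..., a_n are real numbers such that all zeros of the polynomial P(x) = Σ_{i=0}^n a_i x^i are real, then for 1 ≤ i ≤ n-1 one has a_i^2 ≥ (1 + 1/i)(1 + 1/(n-i)) · a_{i+1} a_{i-1}. -/
/-!
Differentiating a real-rooted polynomial keeps it real-rooted (Rolle), and so does reversing
its coefficients. For `n = k + m + 2`, differentiating `P` `k` times, reversing with respect to
degree `m + 2` and differentiating `m` more times leaves a real-rooted quadratic whose
coefficients are, up to factorials, `a (k + 2)`, `a (k + 1)`, `a k`; its discriminant being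
nonnegative is Newton's inequality at `i = k + 1`.
-/

open Finset Polynomial

namespace Polynomial

theorem Splits.derivative {p : ℝ[X]} (hp : p.Splits) : p.derivative.Splits := by
  rcases eq_or_ne p.derivative 0 with h0 | h0
  · rw [h0]; exact Splits.zero
  have hdeg : p.natDegree ≠ 0 := fun h ↦ h0 (by rw [eq_C_of_natDegree_eq_zero h, derivative_C])
  rw [splits_iff_card_roots]
  have := p.card_roots_le_derivative
  have := card_roots' p.derivative
  have := natDegree_derivative_le p
  have := hp.natDegree_eq_card_roots
  omega

theorem Splits.iterate_derivative {p : ℝ[X]} (hp : p.Splits) (k : ℕ) :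
    (Polynomial.derivative^[k] p).Splits := by
  induction k with
  | zero => exact hp
  | succ k ih => rw [Function.iterate_succ_apply']; exact ih.derivative

theorem Splits.reverse {K : Type*} [DivisionRing K] {p : K[X]} (hp : p.Splits) :
    p.reverse.Splits := by
  induction hp using Submonoid.closure_induction with
  | mem q hq =>
    refine Splits.of_natDegree_le_one ((reverse_natDegree_le q).trans ?_)
    rcases hq with ⟨a, rfl⟩ | ⟨a, rfl⟩ <;> simp
  | one => rw [← C_1, reverse_C]; exact Splits.C 1
  | mul q r _ _ hq hr => rw [reverse_mul_of_domain]; exact hq.mul hr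

theorem Splits.reflect {K : Type*} [DivisionRing K] {p : K[X]} (hp : p.Splits) {N : ℕ}
    (hN : p.natDegree ≤ N) : (p.reflect N).Splits := by
  have h := reflect_mul p 1 le_rfl (natDegree_one.trans_le (Nat.zero_le (N - p.natDegree)))
  rw [mul_one, reflect_one, Nat.add_sub_cancel' hN] at h
  rw [h]
  exact hp.reverse.mul (Splits.X_pow _)

theorem splits_of_forall_aeval_eq_zero_im_eq_zero {p : ℝ[X]}
    (h : ∀ z : ℂ, aeval z p = 0 → z.im = 0) : p.Splits := by
  rcases eq_or_ne p 0 with rfl | hp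
  · exact Splits.zero
  refine Splits.of_splits_map_of_injective (algebraMap ℝ ℂ).injective
    (IsAlgClosed.splits _) fun z hz ↦ ⟨z.re, Complex.ext (by simp) ?_⟩
  rw [mem_roots_map_of_injective (algebraMap ℝ ℂ).injective hp] at hz
  simp [h z hz]

theorem Splits.four_mul_coeff_zero_mul_coeff_two_le_sq {R : Type*} [CommRing R] [LinearOrder R]
    [IsStrictOrderedRing R] {q : R[X]} (hq : q.Splits) (hdeg : q.natDegree ≤ 2) :
    4 * (q.coeff 0 * q.coeff 2) ≤ q.coeff 1 ^ 2 := by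
  rcases eq_or_ne q.degree 0 with h0 | h0
  · rw [coeff_eq_zero_of_degree_lt (h0 ▸ by decide : q.degree < 2)]
    simpa using sq_nonneg (q.coeff 1)
  obtain ⟨x, hx⟩ := hq.exists_eval_eq_zero h0
  rw [eval_eq_sum_range' (Nat.lt_succ_of_le hdeg)] at hx
  simp only [sum_range_succ, sum_range_zero] at hx
  have := discrim_eq_sq_of_quadratic_eq_zero (a := q.coeff 2) (b := q.coeff 1) (c := q.coeff 0)
    (x := x) (by linear_combination hx)
  rw [discrim] at this
  linarith [sq_nonneg (2 * q.coeff 2 * x + q.coeff 1)]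

theorem coeff_iterate_derivative_reflect_iterate_derivative {R : Type*} [Semiring R] (p : R[X])
    (k m : ℕ) {d j : ℕ} (hj : j ≤ d) :
    (derivative^[m] ((derivative^[k] p).reflect (d + m))).coeff j =
      (j + m).descFactorial m • (d - j + k).descFactorial k • p.coeff (d - j + k) := by
  rw [coeff_iterate_derivative, coeff_reflect, revAt_le (by omega), coeff_iterate_derivative,
    Nat.add_sub_add_right]

theorem Splits.newton_coeff_le {p : ℝ[X]} (hp : p.Splits) {k m : ℕ}
    (hdeg : p.natDegree ≤ k + m + 2) :
    ((k : ℝ) + 2) * ((m : ℝ) + 2) * (p.coeff k * p.coeff (k + 2)) ≤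
      ((k : ℝ) + 1) * ((m : ℝ) + 1) * p.coeff (k + 1) ^ 2 := by
  have hk : (Polynomial.derivative^[k] p).natDegree ≤ 2 + m :=
    (natDegree_iterate_derivative p k).trans (by omega : p.natDegree - k ≤ 2 + m)
  set q := Polynomial.derivative^[m] ((Polynomial.derivative^[k] p).reflect (2 + m))
  have hq : q.Splits := ((hp.iterate_derivative k).reflect hk).iterate_derivative m
  have hqdeg : q.natDegree ≤ 2 := (natDegree_iterate_derivative _ m).trans <| by
    have := natDegree_reflect_le (N := 2 + m) (p := Polynomial.derivative^[k] p)
    omega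
  have hdesc : ∀ j n : ℕ, ((j + n).descFactorial n : ℝ) = (j + n).factorial / j.factorial := by
    intro j n
    rw [eq_div_iff (by positivity)]
    exact_mod_cast by simpa [mul_comm] using Nat.factorial_mul_descFactorial (Nat.le_add_left n j)
  have h := hq.four_mul_coeff_zero_mul_coeff_two_le_sq hqdeg
  simp only [q, coeff_iterate_derivative_reflect_iterate_derivative p k m zero_le_two,
    coeff_iterate_derivative_reflect_iterate_derivative p k m one_le_two,
    coeff_iterate_derivative_reflect_iterate_derivative p k m (le_refl 2), nsmul_eq_mul, hdesc] at h
  norm_num [add_comm _ k, add_comm _ m, Nat.factorial_succ] at h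
  have hpos : (0 : ℝ) < (k.factorial * m.factorial) ^ 2 * ((k + 1) * (m + 1)) := by positivity
  refine le_of_mul_le_mul_left ?_ hpos
  linear_combination h

end Polynomial

/-- Newton's inequality. -/
theorem newton_inequality (n : ℕ) (a : ℕ → ℝ)
    (hreal : ∀ z : ℂ, (∑ i ∈ range (n + 1), (a i : ℂ) * z ^ i) = 0 → z.im = 0) :
    ∀ i, 1 ≤ i → i ≤ n - 1 →
      (1 + 1 / (i : ℝ)) * (1 + 1 / ((n - i : ℕ) : ℝ)) * (a (i + 1) * a (i - 1)) ≤ (a i) ^ 2 := by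
  intro i hi hin
  obtain ⟨k, rfl⟩ : ∃ k, i = k + 1 := ⟨i - 1, by omega⟩
  obtain ⟨m, rfl⟩ : ∃ m, n = k + m + 2 := ⟨n - k - 2, by omega⟩
  set P : ℝ[X] := ∑ j ∈ range (k + m + 2 + 1), C (a j) * X ^ j
  have hcoeff : ∀ j < k + m + 3, P.coeff j = a j := by
    intro j hj
    simp [P, hj]
  have hdeg : P.natDegree ≤ k + m + 2 := natDegree_sum_le_of_forall_le _ _ fun j hj ↦
    (natDegree_C_mul_X_pow_le _ _).trans (Nat.lt_succ_iff.mp (mem_range.mp hj))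
  have hP : P.Splits :=
    splits_of_forall_aeval_eq_zero_im_eq_zero fun z hz ↦ hreal z (by simpa [P] using hz)
  have hnewton := hP.newton_coeff_le hdeg
  rw [hcoeff k (by omega), hcoeff (k + 1) (by omega), hcoeff (k + 2) (by omega)] at hnewton
  rw [show k + m + 2 - (k + 1) = m + 1 by omega, Nat.add_sub_cancel]
  calc _ = (k + 2) * (m + 2) * (a k * a (k + 2)) / ((k + 1) * (m + 1)) := by
        push_cast; field_simp; ring
    _ ≤ a (k + 1) ^ 2 := by rw [div_le_iff₀ (by positivity)]; linarith
end
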